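/- arXiv:1111.0450 — 8 statements merged into one kernel-verified Lean document; each statement's English description precedes it below -/
import Mathlib

section
/- Let Φ be a root system and let {γ_1, ..., γ_n} ⊆ Φ be a Z-basis of the root lattice ZΦ. Let W' be the subgroup of the Weyl group generated by the reflections s_{γ_1}, ..., s_{γ_n}. Then for every root α ∈ Φ there exist w ∈ W' and an index i such that α = w(γ_i). -/
/-!
Induct on the height `∑ |cᵢ|` of a root `β = ∑ cᵢ γᵢ`. The pairings `⟪β, γᵢ⟫` are integers,
since `β - s_{γᵢ} β = ⟪β, γᵢ⟫ γᵢ` lies in the lattice spanned by the basis `γ`. Expanding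
`2 = ⟪β, β⟫ = ∑ cᵢ ⟪β, γᵢ⟫` gives an index with `cᵢ ⟪β, γᵢ⟫ > 0`, and Cauchy–Schwarz forces
`|⟪β, γᵢ⟫| ≤ 2`. If `⟪β, γᵢ⟫ = ±2` then `β = ±γᵢ = ±s_{γᵢ}(γᵢ)`; if `⟪β, γᵢ⟫ = ±1`, the root
`s_{γᵢ} β = β ∓ γᵢ` has smaller height and `β = s_{γᵢ}(s_{γᵢ} β)`.
-/

open scoped RealInnerProductSpace

section

variable {V : Type*} [NormedAddCommGroup V] [InnerProductSpace ℝ V]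

theorem reflect_reflect {a : V} (ha : ⟪a, a⟫ = 2) (v : V) :
    (v - ⟪v, a⟫ • a) - ⟪v - ⟪v, a⟫ • a, a⟫ • a = v := by
  rw [inner_sub_left, real_inner_smul_left, ha]
  module

theorem eq_of_inner_eq_two {a b : V} (ha : ⟪a, a⟫ = 2) (hb : ⟪b, b⟫ = 2) (hab : ⟪a, b⟫ = 2) :
    a = b := by
  have h : ⟪a - b, a - b⟫ = 0 := by
    rw [inner_sub_sub_self, real_inner_comm a b, ha, hb, hab]
    norm_num
  exact sub_eq_zero.mp (inner_self_eq_zero.mp h)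

theorem inner_mul_inner_le_four {a b : V} (ha : ⟪a, a⟫ = 2) (hb : ⟪b, b⟫ = 2) :
    ⟪a, b⟫ * ⟪a, b⟫ ≤ 4 := by
  have := real_inner_mul_inner_self_le a b
  rw [ha, hb] at this
  linarith

variable {n : ℕ} {γ : Fin n → V}

theorem sum_sub_single_smul (f : Fin n → ℝ) (i : Fin n) (t : ℝ) :
    ∑ k, (f - Pi.single i t : Fin n → ℝ) k • γ k = ∑ k, f k • γ k - t • γ i := by
  simp [sub_smul, Finset.sum_sub_distrib, Pi.single_apply, ite_smul]

theorem sum_intCast_sub_single_smul (c : Fin n → ℤ) (i : Fin n) (t : ℤ) :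
    ∑ k, ((c - Pi.single i t : Fin n → ℤ) k : ℝ) • γ k =
      ∑ k, (c k : ℝ) • γ k - (t : ℝ) • γ i := by
  rw [← sum_sub_single_smul]
  congr! 2 with k
  rcases eq_or_ne k i with rfl | hk <;> simp [*]

theorem LinearIndependent.eq_sub_of_sum_sub_smul (hli : LinearIndependent ℝ γ)
    {c d : Fin n → ℤ} {r : ℝ} {i : Fin n}
    (h : ∑ k, (c k : ℝ) • γ k - r • γ i = ∑ k, (d k : ℝ) • γ k) :
    r = ((c i - d i : ℤ) : ℝ) := by
  rw [← sum_sub_single_smul] at h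
  have hi := Fintype.linearIndependent_iffₛ.mp hli _ _ h i
  simp only [Pi.sub_apply, Pi.single_eq_same] at hi
  push_cast
  linarith

theorem exists_pos_coeff_mul_inner {β : V} (hβ : ⟪β, β⟫ = 2) {c T : Fin n → ℤ}
    (hc : β = ∑ i, (c i : ℝ) • γ i) (hT : ∀ i, ⟪β, γ i⟫ = T i) :
    ∃ i, 0 < c i * T i := by
  have hsum : ∑ i, c i * T i = 2 := by
    have : ⟪β, β⟫ = ∑ i, (c i : ℝ) * T i := by
      nth_rewrite 2 [hc]
      simp only [inner_sum, real_inner_smul_right, hT]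
    exact_mod_cast this.symm.trans hβ
  by_contra! h
  have := Finset.sum_nonpos fun i (_ : i ∈ Finset.univ) => h i
  omega

theorem Int.natAbs_sub_lt_natAbs_of_mul_pos {c t : ℤ} (h : 0 < c * t) (ht : t.natAbs = 1) :
    (c - t).natAbs < c.natAbs := by
  rcases Int.natAbs_eq t with ht' | ht' <;> rw [ht, Nat.cast_one] at ht' <;> subst ht' <;> omega

def coeffHeight (c : Fin n → ℤ) : ℕ := ∑ k, (c k).natAbs

theorem coeffHeight_sub_single_lt {c : Fin n → ℤ} {i : Fin n} {t : ℤ} (h : 0 < c i * t)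
    (ht : t.natAbs = 1) : coeffHeight (c - Pi.single i t) < coeffHeight c := by
  have hi := Int.natAbs_sub_lt_natAbs_of_mul_pos h ht
  refine Finset.sum_lt_sum (fun k _ => ?_) ⟨i, Finset.mem_univ i, by simpa using hi⟩
  rcases eq_or_ne k i with rfl | hk
  · simpa using hi.le
  · simp [hk]

theorem exists_intCast_eq_inner {Φ : Set V} (hrefl : ∀ α ∈ Φ, ∀ β ∈ Φ, β - ⟪β, α⟫ • α ∈ Φ)
    (hli : LinearIndependent ℝ γ) (hspan : ∀ α ∈ Φ, ∃ c : Fin n → ℤ, α = ∑ i, (c i : ℝ) • γ i)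
    {β : V} (hβ : β ∈ Φ) {i : Fin n} (hγi : γ i ∈ Φ) :
    ∃ t : ℤ, ⟪β, γ i⟫ = t := by
  obtain ⟨c, hc⟩ := hspan β hβ
  obtain ⟨d, hd⟩ := hspan _ (hrefl _ hγi β hβ)
  have h : ∑ k, (c k : ℝ) • γ k - ⟪β, γ i⟫ • γ i = ∑ k, (d k : ℝ) • γ k := by rw [← hc, hd]
  exact ⟨_, hli.eq_sub_of_sum_sub_smul h⟩

theorem exists_word_of_coeffs {Φ : Set V} (hlen : ∀ α ∈ Φ, ⟪α, α⟫ = 2)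
    (hrefl : ∀ α ∈ Φ, ∀ β ∈ Φ, β - ⟪β, α⟫ • α ∈ Φ) (hγΦ : ∀ i, γ i ∈ Φ)
    (hli : LinearIndependent ℝ γ) (hspan : ∀ α ∈ Φ, ∃ c : Fin n → ℤ, α = ∑ i, (c i : ℝ) • γ i)
    (c : Fin n → ℤ) {β : V} (hβ : β ∈ Φ) (hc : β = ∑ i, (c i : ℝ) • γ i) :
    ∃ (l : List (Fin n)) (i : Fin n), β = l.foldr (fun j v => v - ⟪v, γ j⟫ • γ j) (γ i) := by
  induction hN : coeffHeight c using Nat.strong_induction_on generalizing c β with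
  | _ N ih =>
    choose T hT using fun i => exists_intCast_eq_inner hrefl hli hspan hβ (hγΦ i)
    obtain ⟨i, hi⟩ := exists_pos_coeff_mul_inner (hlen β hβ) hc hT
    have hγi := hlen _ (hγΦ i)
    have hTi_sq : T i * T i ≤ 4 := by
      exact_mod_cast hT i ▸ inner_mul_inner_le_four (hlen β hβ) hγi
    have hTi_ne : T i ≠ 0 := by rintro h; simp [h] at hi
    have hTi_cases : T i = 2 ∨ T i = -2 ∨ (T i).natAbs = 1 := by
      have : -2 ≤ T i := by nlinarith
      have : T i ≤ 2 := by nlinarith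
      omega
    rcases hTi_cases with hTi | hTi | hTi
    · refine ⟨[], i, show β = γ i from ?_⟩
      exact eq_of_inner_eq_two (hlen β hβ) hγi (by rw [hT, hTi]; norm_num)
    · have hβ_neg : β = -γ i := eq_of_inner_eq_two (hlen β hβ) (by simpa using hγi)
        (by rw [inner_neg_right, hT, hTi]; norm_num)
      refine ⟨[i], i, ?_⟩
      rw [hβ_neg, List.foldr_cons, List.foldr_nil, hγi]
      module
    · have hsβ : β - ⟪β, γ i⟫ • γ i = ∑ k, ((c - Pi.single i (T i) : Fin n → ℤ) k : ℝ) • γ k := by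
        rw [sum_intCast_sub_single_smul, ← hc, hT]
      obtain ⟨l, j, hl⟩ := ih _ (hN ▸ coeffHeight_sub_single_lt hi hTi) _
        (hrefl _ (hγΦ i) β hβ) hsβ rfl
      exact ⟨i :: l, j, by rw [List.foldr_cons, ← hl, reflect_reflect hγi]⟩

end

/-- If `{γ_1, ..., γ_n} ⊆ Φ` is a `ℤ`-basis of the root lattice of a
simply-laced root system `Φ` (roots of squared length 2), then every root `α ∈ Φ`
is of the form `w(γ_i)` for some `w` in the subgroup `W'` of the Weyl group
generated by the reflections `s_{γ_1}, ..., s_{γ_n}` (an element of `W'` being a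
word in these involutive generators) and some index `i`. -/
theorem stmt3 {V : Type*} [NormedAddCommGroup V] [InnerProductSpace ℝ V]
    (Φ : Set V)
    (hlen : ∀ α ∈ Φ, ⟪α, α⟫ = 2)
    (hrefl : ∀ α ∈ Φ, ∀ β ∈ Φ, β - ⟪β, α⟫ • α ∈ Φ)
    {n : ℕ} (γ : Fin n → V) (hγΦ : ∀ i, γ i ∈ Φ)
    (hli : LinearIndependent ℝ γ)
    (hspan : ∀ α ∈ Φ, ∃ c : Fin n → ℤ, α = ∑ i, (c i : ℝ) • γ i)
    {α : V} (hα : α ∈ Φ) :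
    ∃ (l : List (Fin n)) (i : Fin n),
      α = l.foldr (fun j v => v - ⟪v, γ j⟫ • γ j) (γ i) := by
  obtain ⟨c, hc⟩ := hspan α hα
  exact exists_word_of_coeffs hlen hrefl hγΦ hli hspan c hα hc
end

section
/- Let Φ be a simply-laced root system with all roots of squared length 2. If α and β are positive roots, written α = Σ a_i γ_i and β = Σ b_i γ_i in terms of a Z-basis {γ_1, ..., γ_n} ⊆ Φ of ZΦ, and |a_i| = |b_i| for all i, then α = β. -/
/-!
Write `α = y + x` and `β = y - x` with `x = ∑ (aᵢ - bᵢ)/2 • γᵢ` and `y = ∑ (aᵢ + bᵢ)/2 • γᵢ`,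
which have integer coefficients because `aᵢ ≡ bᵢ mod 2`. By the parallelogram law
`‖x‖² + ‖y‖² = (‖α‖² + ‖β‖²) / 2 = 2`, while every nonzero vector of the even lattice spanned
by the `γᵢ` has squared length at least `2`. Hence `x = 0`, i.e. `α = β`, or `y = 0`, i.e.
`α = -β`, which is impossible for two positive roots.
-/

open scoped RealInnerProductSpace

section

variable {V : Type*} [NormedAddCommGroup V] [InnerProductSpace ℝ V] {s : Set V}

theorem exists_int_inner_eq_of_mem_closure (hs : ∀ u ∈ s, ∀ v ∈ s, ∃ m : ℤ, ⟪u, v⟫ = m)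
    {x y : V} (hx : x ∈ AddSubgroup.closure s) (hy : y ∈ AddSubgroup.closure s) :
    ∃ m : ℤ, ⟪x, y⟫ = m := by
  induction hx, hy using AddSubgroup.closure_induction₂ with
  | mem u v hu hv => exact hs u hu v hv
  | zero_left => exact ⟨0, by simp⟩
  | zero_right => exact ⟨0, by simp⟩
  | add_left x y z _ _ _ hxz hyz =>
    obtain ⟨m, hm⟩ := hxz
    obtain ⟨k, hk⟩ := hyz
    exact ⟨m + k, by rw [inner_add_left, hm, hk, Int.cast_add]⟩
  | add_right y z x _ _ _ hxy hxz =>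
    obtain ⟨m, hm⟩ := hxy
    obtain ⟨k, hk⟩ := hxz
    exact ⟨m + k, by rw [inner_add_right, hm, hk, Int.cast_add]⟩
  | neg_left x y _ _ hxy =>
    obtain ⟨m, hm⟩ := hxy
    exact ⟨-m, by rw [inner_neg_left, hm, Int.cast_neg]⟩
  | neg_right x y _ _ hxy =>
    obtain ⟨m, hm⟩ := hxy
    exact ⟨-m, by rw [inner_neg_right, hm, Int.cast_neg]⟩

theorem exists_inner_self_eq_two_mul_of_mem_closure
    (hs : ∀ u ∈ s, ∀ v ∈ s, ∃ m : ℤ, ⟪u, v⟫ = m) (hs_even : ∀ u ∈ s, ∃ m : ℤ, ⟪u, u⟫ = 2 * m)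
    {x : V} (hx : x ∈ AddSubgroup.closure s) : ∃ m : ℤ, ⟪x, x⟫ = 2 * m := by
  induction hx using AddSubgroup.closure_induction with
  | mem u hu => exact hs_even u hu
  | zero => exact ⟨0, by simp⟩
  | add x y hx hy hxx hyy =>
    obtain ⟨m, hm⟩ := hxx
    obtain ⟨k, hk⟩ := hyy
    obtain ⟨l, hl⟩ := exists_int_inner_eq_of_mem_closure hs hx hy
    refine ⟨m + l + k, ?_⟩
    rw [real_inner_add_add_self, hm, hk, hl]
    push_cast
    ring
  | neg x _ hxx => simpa only [inner_neg_neg] using hxx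

theorem two_le_inner_self_of_mem_closure
    (hs : ∀ u ∈ s, ∀ v ∈ s, ∃ m : ℤ, ⟪u, v⟫ = m) (hs_even : ∀ u ∈ s, ∃ m : ℤ, ⟪u, u⟫ = 2 * m)
    {x : V} (hx : x ∈ AddSubgroup.closure s) (hx0 : x ≠ 0) : 2 ≤ ⟪x, x⟫ := by
  obtain ⟨m, hm⟩ := exists_inner_self_eq_two_mul_of_mem_closure hs hs_even hx
  have hm_pos : (0 : ℝ) < m := by linarith [real_inner_self_pos.mpr hx0]
  have hm_one : (1 : ℝ) ≤ m := by exact_mod_cast Int.cast_pos.mp hm_pos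
  linarith

theorem sum_intCast_smul_mem_closure {ι : Type*} [Fintype ι] (γ : ι → V) (c : ι → ℤ) :
    ∑ i, (c i : ℝ) • γ i ∈ AddSubgroup.closure (Set.range γ) :=
  AddSubgroup.sum_mem _ fun i _ ↦ by
    rw [Int.cast_smul_eq_zsmul]
    exact AddSubgroup.zsmul_mem _ (AddSubgroup.subset_closure (Set.mem_range_self i)) _

theorem eq_or_eq_neg_of_eq_add_of_eq_sub (L : AddSubgroup V) (hL : ∀ z ∈ L, z ≠ 0 → 2 ≤ ⟪z, z⟫)
    {α β x y : V} (hx : x ∈ L) (hy : y ∈ L)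
    (hα : ⟪α, α⟫ = 2) (hβ : ⟪β, β⟫ = 2) (hαxy : α = y + x) (hβxy : β = y - x) :
    α = β ∨ α = -β := by
  have hsum : ⟪x, x⟫ + ⟪y, y⟫ = 2 := by
    rw [hαxy, real_inner_add_add_self] at hα
    rw [hβxy, real_inner_sub_sub_self] at hβ
    linarith
  by_cases hx0 : x = 0
  · left
    rw [hαxy, hβxy, hx0, add_zero, sub_zero]
  by_cases hy0 : y = 0
  · right
    rw [hαxy, hβxy, hy0, zero_add, zero_sub, neg_neg]
  linarith [hL x hx hx0, hL y hy hy0]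

end

theorem exists_add_sub_of_abs_eq {ι : Type*} {a b : ι → ℤ} (h : ∀ i, |a i| = |b i|) :
    ∃ u v : ι → ℤ, a = v + u ∧ b = v - u := by
  refine ⟨fun i ↦ (a i - b i) / 2, fun i ↦ (a i + b i) / 2, funext fun i ↦ ?_,
    funext fun i ↦ ?_⟩ <;>
  · rcases abs_eq_abs.mp (h i) with h | h <;> simp only [Pi.add_apply, Pi.sub_apply] <;> omega

theorem stmt5_general {V : Type*} [NormedAddCommGroup V] [InnerProductSpace ℝ V]
    (Φ : Set V)
    (hlen : ∀ α ∈ Φ, ⟪α, α⟫ = 2)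
    (hcrys : ∀ α ∈ Φ, ∀ β ∈ Φ, ∃ m : ℤ, ⟪α, β⟫ = m)
    {n : ℕ} (γ : Fin n → V) (hγΦ : ∀ i, γ i ∈ Φ)
    (Pos : Set V) (hPosΦ : Pos ⊆ Φ)
    (hPosdisj : ∀ α ∈ Pos, -α ∉ Pos)
    {α β : V} (hα : α ∈ Pos) (hβ : β ∈ Pos)
    (a b : Fin n → ℤ)
    (ha : α = ∑ i, (a i : ℝ) • γ i) (hb : β = ∑ i, (b i : ℝ) • γ i)
    (habs : ∀ i, |a i| = |b i|) :
    α = β := by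
  have hint : ∀ u ∈ Set.range γ, ∀ v ∈ Set.range γ, ∃ m : ℤ, ⟪u, v⟫ = m := by
    rintro _ ⟨i, rfl⟩ _ ⟨j, rfl⟩
    exact hcrys _ (hγΦ i) _ (hγΦ j)
  have heven : ∀ u ∈ Set.range γ, ∃ m : ℤ, ⟪u, u⟫ = 2 * m := by
    rintro _ ⟨i, rfl⟩
    exact ⟨1, by rw [hlen _ (hγΦ i)]; norm_num⟩
  obtain ⟨u, v, rfl, rfl⟩ := exists_add_sub_of_abs_eq habs
  simp only [Pi.add_apply, Pi.sub_apply, Int.cast_add, Int.cast_sub, add_smul, sub_smul,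
    Finset.sum_add_distrib, Finset.sum_sub_distrib] at ha hb
  have hlattice := fun z hz ↦ two_le_inner_self_of_mem_closure hint heven (x := z) hz
  refine (eq_or_eq_neg_of_eq_add_of_eq_sub _ hlattice
    (sum_intCast_smul_mem_closure γ u) (sum_intCast_smul_mem_closure γ v)
    (hlen α (hPosΦ hα)) (hlen β (hPosΦ hβ)) ha hb).resolve_right ?_
  rintro rfl
  exact hPosdisj β hβ hα

/-- If two positive roots of a simply-laced root system have
coefficient vectors with the same absolute values with respect to a `ℤ`-basis of
roots of the root lattice, then the two roots are equal. -/
theorem stmt5 {V : Type*} [NormedAddCommGroup V] [InnerProductSpace ℝ V]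
    (Φ : Set V)
    (hlen : ∀ α ∈ Φ, ⟪α, α⟫ = 2)
    (hcrys : ∀ α ∈ Φ, ∀ β ∈ Φ, ∃ m : ℤ, ⟪α, β⟫ = m)
    {n : ℕ} (γ : Fin n → V) (hγΦ : ∀ i, γ i ∈ Φ)
    (hli : LinearIndependent ℝ γ)
    (hspan : ∀ α ∈ Φ, ∃ c : Fin n → ℤ, α = ∑ i, (c i : ℝ) • γ i)
    (Pos : Set V) (hPosΦ : Pos ⊆ Φ)
    (hPos : ∀ α ∈ Φ, α ∈ Pos ∨ -α ∈ Pos)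
    (hPosdisj : ∀ α ∈ Pos, -α ∉ Pos)
    {α β : V} (hα : α ∈ Pos) (hβ : β ∈ Pos)
    (a b : Fin n → ℤ)
    (ha : α = ∑ i, (a i : ℝ) • γ i) (hb : β = ∑ i, (b i : ℝ) • γ i)
    (habs : ∀ i, |a i| = |b i|) :
    α = β :=
  stmt5_general Φ hlen hcrys γ hγΦ Pos hPosΦ hPosdisj hα hβ a b ha hb habs
end

section
/- Let γ_{x_0}, γ_{x_1}, ..., γ_{x_t} be roots in a simply-laced root system (roots of squared length 2) such that (γ_{x_i}, γ_{x_j}) = ±1 if |i - j| = 1 and (γ_{x_i}, γ_{x_j}) = 0 if |i - j| ≥ 2 (for i ≠ j). Then for each 1 ≤ r ≤ t, s_{γ_{x_r}} ⋯ s_{γ_{x_1}}(γ_{x_0}) = γ_{x_0} + Σ_{k=1}^{r} (-1)^k (∏_{l=1}^{k} (γ_{x_l}, γ_{x_{l-1}})) γ_{x_k}. -/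
/-!
Each reflection `s_{γ_{r+1}}` changes the running vector `∑_{k ≤ r} c_k γ_k` only by a multiple of
`γ_{r+1}`, and since `γ_{r+1}` is orthogonal to all of `γ_0, …, γ_{r-1}`, that multiple is
`-c_r (γ_r, γ_{r+1})`. So the coefficients obey `c_{r+1} = -c_r (γ_{r+1}, γ_r)` with `c_0 = 1`.
-/

open scoped RealInnerProductSpace

/-- `sref γ v = s_γ(v) = v - (v, γ) γ`, the reflection in a root `γ` of squared
length 2. -/
noncomputable def sref {V : Type*} [NormedAddCommGroup V] [InnerProductSpace ℝ V]
    (γ v : V) : V := v - ⟪v, γ⟫ • γ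

/-- `applySeq γ r v = s_{γ_r} ∘ ⋯ ∘ s_{γ_1} (v)`. -/
noncomputable def applySeq {V : Type*} [NormedAddCommGroup V] [InnerProductSpace ℝ V]
    (γ : ℕ → V) : ℕ → V → V
  | 0, v => v
  | r + 1, v => sref (γ (r + 1)) (applySeq γ r v)

open Finset

section
variable {V : Type*} [NormedAddCommGroup V] [InnerProductSpace ℝ V] (γ : ℕ → V)

noncomputable def pathCoeff (k : ℕ) : ℝ :=
  (-1) ^ k * ∏ l ∈ Icc 1 k, ⟪γ l, γ (l - 1)⟫

@[simp]
lemma pathCoeff_zero : pathCoeff γ 0 = 1 := by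
  simp [pathCoeff]

lemma pathCoeff_succ (k : ℕ) : pathCoeff γ (k + 1) = -(pathCoeff γ k * ⟪γ (k + 1), γ k⟫) := by
  rw [pathCoeff, prod_Icc_succ_top (by omega), Nat.add_sub_cancel, pow_succ, pathCoeff]
  ring

lemma inner_sum_range_smul_of_orthogonal (c : ℕ → ℝ) (r : ℕ)
    (horth : ∀ k < r, ⟪γ k, γ (r + 1)⟫ = 0) :
    ⟪∑ k ∈ range (r + 1), c k • γ k, γ (r + 1)⟫ = c r * ⟪γ r, γ (r + 1)⟫ := by
  rw [sum_inner, sum_range_succ, sum_eq_zero, zero_add, real_inner_smul_left]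
  intro k hk
  rw [real_inner_smul_left, horth k (mem_range.mp hk), mul_zero]

lemma applySeq_eq_sum_pathCoeff (t : ℕ) (horth : ∀ i j, i + 2 ≤ j → j ≤ t → ⟪γ j, γ i⟫ = 0)
    (r : ℕ) (hrt : r ≤ t) :
    applySeq γ r (γ 0) = ∑ k ∈ range (r + 1), pathCoeff γ k • γ k := by
  induction r with
  | zero => simp [applySeq]
  | succ r ih =>
    have hinner := inner_sum_range_smul_of_orthogonal γ (pathCoeff γ) r fun k hk =>
      by rw [real_inner_comm]; exact horth k (r + 1) (by omega) hrt
    rw [applySeq, ih (by omega), sref, hinner, sum_range_succ _ (r + 1), pathCoeff_succ,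
      real_inner_comm]
    module

end

theorem stmt7_general {V : Type*} [NormedAddCommGroup V] [InnerProductSpace ℝ V]
    (γ : ℕ → V) (t : ℕ)
    (horth : ∀ i j, i + 2 ≤ j → j ≤ t → ⟪γ j, γ i⟫ = 0)
    (r : ℕ) (hrt : r ≤ t) :
    applySeq γ r (γ 0) =
      γ 0 + ∑ k ∈ Finset.Icc 1 r,
        ((-1 : ℝ) ^ k * ∏ l ∈ Finset.Icc 1 k, ⟪γ l, γ (l - 1)⟫) • γ k := by
  rw [applySeq_eq_sum_pathCoeff γ t horth r hrt, Nat.range_succ_eq_Icc_zero,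
    Icc_eq_cons_Ioc r.zero_le, sum_cons, ← Icc_add_one_left_eq_Ioc, zero_add, pathCoeff_zero,
    one_smul]
  rfl

/-- For a "path" of roots `γ_0, ..., γ_t` (squared length 2,
consecutive inner products `±1`, non-consecutive orthogonal),
`s_{γ_r} ⋯ s_{γ_1}(γ_0) = γ_0 + Σ_{k=1}^{r} (-1)^k (∏_{l=1}^{k} (γ_l, γ_{l-1})) γ_k`
for each `1 ≤ r ≤ t`. -/
theorem stmt7 {V : Type*} [NormedAddCommGroup V] [InnerProductSpace ℝ V]
    (γ : ℕ → V) (t : ℕ)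
    (hlen : ∀ i, i ≤ t → ⟪γ i, γ i⟫ = 2)
    (hadj : ∀ i, i + 1 ≤ t → ⟪γ (i + 1), γ i⟫ = 1 ∨ ⟪γ (i + 1), γ i⟫ = -1)
    (horth : ∀ i j, i + 2 ≤ j → j ≤ t → ⟪γ j, γ i⟫ = 0)
    (r : ℕ) (hr1 : 1 ≤ r) (hrt : r ≤ t) :
    applySeq γ r (γ 0) =
      γ 0 + ∑ k ∈ Finset.Icc 1 r,
        ((-1 : ℝ) ^ k * ∏ l ∈ Finset.Icc 1 k, ⟪γ l, γ (l - 1)⟫) • γ k :=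
  stmt7_general γ t horth r hrt
end

section
/- Let Q_T be the quiver associated to a triangulation T of a regular (n+3)-gon by non-crossing diagonals. Then the only cycles in the underlying unoriented graph of Q_T are 3-cycles arising from internal triangles of T (triangles all of whose three sides are diagonals). -/
/-- One chord `{a,b}` of a convex polygon (vertices labelled `0, ..., m-1` in
order) crosses another chord `{c,d}` "starting first": `a < c < b < d`. -/
def CrossAux {m : ℕ} (p q : Sym2 (Fin m)) : Prop :=
  ∃ a b c d : Fin m, p = s(a, b) ∧ q = s(c, d) ∧ a < c ∧ c < b ∧ b < d

/-- Two chords of a convex polygon cross (have a common interior point). -/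
def Crosses {m : ℕ} (p q : Sym2 (Fin m)) : Prop := CrossAux p q ∨ CrossAux q p

/-- `{a, a+1}` (indices mod `m`) is a boundary edge of the polygon. -/
def IsBoundaryEdge {m : ℕ} [NeZero m] (p : Sym2 (Fin m)) : Prop :=
  ∃ a : Fin m, p = s(a, a + 1)

/-- A diagonal: a pair of distinct, non-adjacent vertices of the polygon. -/
def IsDiagonal {m : ℕ} [NeZero m] (p : Sym2 (Fin m)) : Prop :=
  ¬ p.IsDiag ∧ ¬ IsBoundaryEdge p

/-- A side of a triangle of the triangulation `T`: a diagonal of `T` or a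
boundary edge. -/
def IsSide {m : ℕ} [NeZero m] (T : Finset (Sym2 (Fin m))) (p : Sym2 (Fin m)) : Prop :=
  p ∈ T ∨ IsBoundaryEdge p

/-- `a, b, c` span a triangle of the triangulation `T`: they are distinct and
all three sides are diagonals of `T` or boundary edges. -/
def IsTriangle {m : ℕ} [NeZero m] (T : Finset (Sym2 (Fin m))) (a b c : Fin m) : Prop :=
  a ≠ b ∧ b ≠ c ∧ a ≠ c ∧ IsSide T s(a, b) ∧ IsSide T s(b, c) ∧ IsSide T s(a, c)

/-- The underlying (unoriented) graph of the quiver `Q_T` of the triangulation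
`T`: vertices are the diagonals of `T`, and two distinct diagonals are adjacent
iff they bound a common triangle of `T`. -/
def QT {m : ℕ} [NeZero m] (T : Finset (Sym2 (Fin m))) :
    SimpleGraph {p : Sym2 (Fin m) // p ∈ T} :=
  SimpleGraph.fromRel (fun d e => ∃ a b c : Fin m, IsTriangle T a b c ∧
    (d : Sym2 (Fin m)) ∈ ({s(a, b), s(b, c), s(a, c)} : Set (Sym2 (Fin m))) ∧
    (e : Sym2 (Fin m)) ∈ ({s(a, b), s(b, c), s(a, c)} : Set (Sym2 (Fin m))))

/-!
Let `v = s(a, b)` be a diagonal on a cycle of `Q_T`, with neighbours `x` and `y` on the cycle.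
Adjacent vertices of `Q_T` are sides of a common triangle, and since sides of `T` do not cross,
two such sides other than `s(a, b)` lie on the same side of `s(a, b)`. The rest of the cycle joins
`x` to `y` avoiding `v`, so the triangles through `v` containing `x` and `y` lie on the same side
of `v`; as at most one triangle of `T` borders `s(a, b)` on each side, `v`, `x`, `y` are the three
sides of one triangle. The same argument at `x` shows that the successor of `x` is the third side
of the triangle through `v` and `x`, namely `y`, so the cycle is `v, x, y`.
-/

lemma Sym2.third_side_eq {α : Type*} {a b c a' b' c' : α} (hne : s(a, b) ≠ s(a, c))
    (h₁ : s(a, b) = s(a', b')) (h₂ : s(a, c) = s(a', c')) : s(b, c) = s(b', c') := by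
  simp only [ne_eq, Sym2.eq_iff] at *
  grind

section

variable {m : ℕ}

def triangleSides (a b c : Fin m) : Set (Sym2 (Fin m)) := {s(a, b), s(b, c), s(a, c)}

/-- For a chord `p ≠ s(a, b)` not crossing `s(a, b)`, this says that `p` lies on the side of
`s(a, b)` containing the vertices `a + 1, …, b - 1`. -/
def OnInnerSide (a b : Fin m) (p : Sym2 (Fin m)) : Prop := ∃ v ∈ p, v ∈ Set.Ioo a b

@[simp]
lemma onInnerSide_mk {a b u w : Fin m} :
    OnInnerSide a b s(u, w) ↔ u ∈ Set.Ioo a b ∨ w ∈ Set.Ioo a b := by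
  simp [OnInnerSide]

end

section

variable {m : ℕ} [NeZero m] {T : Finset (Sym2 (Fin m))}

lemma Fin.val_add_one_eq (a : Fin m) :
    (a + 1).val = a.val + 1 ∨ (a.val + 1 = m ∧ (a + 1).val = 0) := by
  obtain ⟨k, rfl⟩ : ∃ k, m = k + 1 := ⟨m - 1, (Nat.succ_pred_eq_of_pos (NeZero.pos m)).symm⟩
  rcases eq_or_ne a (Fin.last k) with rfl | h
  · right; simp
  · left; simp [Fin.val_add_one, h]

lemma IsBoundaryEdge.not_crossAux_left {p q : Sym2 (Fin m)} (hp : IsBoundaryEdge p) :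
    ¬ CrossAux p q := by
  rintro ⟨a, b, c, d, rfl, rfl, hac, hcb, hbd⟩
  obtain ⟨e, he⟩ := hp
  rcases Fin.val_add_one_eq e with h | h <;>
    rcases Sym2.eq_iff.1 he with ⟨rfl, rfl⟩ | ⟨rfl, rfl⟩ <;> omega

lemma IsBoundaryEdge.not_crossAux_right {p q : Sym2 (Fin m)} (hq : IsBoundaryEdge q) :
    ¬ CrossAux p q := by
  rintro ⟨a, b, c, d, rfl, rfl, hac, hcb, hbd⟩
  obtain ⟨e, he⟩ := hq
  rcases Fin.val_add_one_eq e with h | h <;>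
    rcases Sym2.eq_iff.1 he with ⟨rfl, rfl⟩ | ⟨rfl, rfl⟩ <;> omega

lemma isSide_comm {a b : Fin m} : IsSide T s(a, b) ↔ IsSide T s(b, a) := by
  rw [Sym2.eq_swap]

lemma not_interleaved_of_isSide (hnc : ∀ p ∈ T, ∀ q ∈ T, ¬ Crosses p q) {a b c d : Fin m}
    (hab : IsSide T s(a, b)) (hcd : IsSide T s(c, d)) : ¬ (a < c ∧ c < b ∧ b < d) := by
  rintro ⟨hac, hcb, hbd⟩
  have hcross : CrossAux s(a, b) s(c, d) := ⟨a, b, c, d, rfl, rfl, hac, hcb, hbd⟩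
  rcases hab with hab | hab
  · rcases hcd with hcd | hcd
    · exact hnc _ hab _ hcd (.inl hcross)
    · exact IsBoundaryEdge.not_crossAux_right hcd hcross
  · exact IsBoundaryEdge.not_crossAux_left hab hcross

lemma mem_Icc_of_isSide (hnc : ∀ p ∈ T, ∀ q ∈ T, ¬ Crosses p q) {a b u w : Fin m}
    (hab : IsSide T s(a, b)) (huw : IsSide T s(u, w)) (hu : u ∈ Set.Ioo a b) :
    w ∈ Set.Icc a b := by
  have := not_interleaved_of_isSide hnc (isSide_comm.1 huw) hab
  have := not_interleaved_of_isSide hnc hab huw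
  simp only [Set.mem_Ioo, Set.mem_Icc] at *
  omega

lemma IsTriangle.isSide_of_mem_triangleSides {a b c : Fin m} {p : Sym2 (Fin m)}
    (h : IsTriangle T a b c) (hp : p ∈ triangleSides a b c) : IsSide T p := by
  obtain ⟨-, -, -, h₁, h₂, h₃⟩ := h
  rcases hp with rfl | rfl | rfl <;> assumption

lemma IsTriangle.of_triangleSides_eq {α β γ a b c : Fin m} (h : IsTriangle T α β γ)
    (hab : a ≠ b) (hbc : b ≠ c) (hac : a ≠ c) (hs : triangleSides α β γ = triangleSides a b c) :
    IsTriangle T a b c := by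
  refine ⟨hab, hbc, hac, ?_, ?_, ?_⟩ <;>
    exact IsTriangle.isSide_of_mem_triangleSides h (hs ▸ by simp [triangleSides])

lemma IsTriangle.exists_of_mem_triangleSides {α β γ a b : Fin m} (h : IsTriangle T α β γ)
    (hab : s(a, b) ∈ triangleSides α β γ) :
    ∃ c, IsTriangle T a b c ∧ triangleSides α β γ = triangleSides a b c := by
  obtain ⟨h₁, h₂, h₃, -⟩ := id h
  have relabel {a b c : Fin m} (hab : a ≠ b) (hbc : b ≠ c) (hac : a ≠ c)
      (hs : triangleSides α β γ = triangleSides a b c) :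
      ∃ c', IsTriangle T a b c' ∧ triangleSides α β γ = triangleSides a b c' :=
    ⟨c, IsTriangle.of_triangleSides_eq h hab hbc hac hs, hs⟩
  rcases hab with hab | hab | hab <;> rcases Sym2.eq_iff.1 hab with ⟨rfl, rfl⟩ | ⟨rfl, rfl⟩ <;>
    [exact relabel h₁ h₂ h₃ rfl;
     refine relabel h₁.symm h₃ h₂ ?_;
     refine relabel h₂ h₃.symm h₁.symm ?_;
     refine relabel h₂.symm h₁.symm h₃.symm ?_;
     refine relabel h₃ h₂.symm h₁ ?_;
     refine relabel h₃.symm h₁ h₂.symm ?_] <;>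
  · ext
    simp only [triangleSides, Set.mem_insert_iff, Set.mem_singleton_iff, Sym2.eq_swap]
    tauto

lemma QT.exists_isTriangle_of_adj {d e : {p : Sym2 (Fin m) // p ∈ T}} {a b : Fin m}
    (h : (QT T).Adj d e) (hd : (d : Sym2 (Fin m)) = s(a, b)) :
    ∃ c, IsTriangle T a b c ∧ ((e : Sym2 (Fin m)) = s(b, c) ∨ (e : Sym2 (Fin m)) = s(a, c)) := by
  have hde : (d : Sym2 (Fin m)) ≠ e := fun h' => h.ne (Subtype.ext h')
  rw [QT, SimpleGraph.fromRel_adj] at h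
  obtain ⟨-, ⟨α, β, γ, htri, hd', he⟩ | ⟨α, β, γ, htri, he, hd'⟩⟩ := h <;>
  · obtain ⟨c, htri', hs⟩ := htri.exists_of_mem_triangleSides (hd ▸ hd')
    replace he : (e : Sym2 (Fin m)) ∈ triangleSides a b c := hs ▸ he
    rcases he with he | he | he
    · exact absurd (hd.trans he.symm) hde
    · exact ⟨c, htri', .inl he⟩
    · exact ⟨c, htri', .inr he⟩

lemma onInnerSide_of_isSide (hnc : ∀ p ∈ T, ∀ q ∈ T, ¬ Crosses p q) {a b u w z : Fin m}
    (hab : IsSide T s(a, b)) (hzu : IsSide T s(z, u)) (hzw : IsSide T s(z, w)) (huw : u ≠ w)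
    (hz : z ∈ Set.Ioo a b) (hne : s(u, w) ≠ s(a, b)) : OnInnerSide a b s(u, w) := by
  have hu := mem_Icc_of_isSide hnc hab hzu hz
  have hw := mem_Icc_of_isSide hnc hab hzw hz
  rw [onInnerSide_mk]
  by_contra h
  simp only [Set.mem_Ioo, Set.mem_Icc, ne_eq, Sym2.eq_iff, not_or, not_and] at *
  omega

lemma IsTriangle.onInnerSide_iff (hnc : ∀ p ∈ T, ∀ q ∈ T, ¬ Crosses p q) {α β γ a b : Fin m}
    {p : Sym2 (Fin m)} (htri : IsTriangle T α β γ) (hab : IsSide T s(a, b))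
    (hp : p ∈ triangleSides α β γ) (hpab : p ≠ s(a, b)) :
    OnInnerSide a b p ↔ α ∈ Set.Ioo a b ∨ β ∈ Set.Ioo a b ∨ γ ∈ Set.Ioo a b := by
  obtain ⟨hαβ, hβγ, hαγ, h₁, h₂, h₃⟩ := htri
  rcases hp with rfl | rfl | rfl <;> refine ⟨by simp only [onInnerSide_mk]; tauto, ?_⟩
  · rintro (h | h | h)
    · simp [h]
    · simp [h]
    · exact onInnerSide_of_isSide hnc hab (isSide_comm.1 h₃) (isSide_comm.1 h₂) hαβ h hpab
  · rintro (h | h | h)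
    · exact onInnerSide_of_isSide hnc hab h₁ h₃ hβγ h hpab
    · simp [h]
    · simp [h]
  · rintro (h | h | h)
    · simp [h]
    · exact onInnerSide_of_isSide hnc hab (isSide_comm.1 h₁) h₂ hαγ h hpab
    · simp [h]

lemma QT.onInnerSide_iff_of_adj (hnc : ∀ p ∈ T, ∀ q ∈ T, ¬ Crosses p q) {a b : Fin m}
    {d e : {p : Sym2 (Fin m) // p ∈ T}} (hab : IsSide T s(a, b)) (h : (QT T).Adj d e)
    (hd : (d : Sym2 (Fin m)) ≠ s(a, b)) (he : (e : Sym2 (Fin m)) ≠ s(a, b)) :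
    OnInnerSide a b d ↔ OnInnerSide a b e := by
  rw [QT, SimpleGraph.fromRel_adj] at h
  obtain ⟨-, ⟨α, β, γ, htri, h₁, h₂⟩ | ⟨α, β, γ, htri, h₂, h₁⟩⟩ := h <;>
  exact (htri.onInnerSide_iff hnc hab h₁ hd).trans (htri.onInnerSide_iff hnc hab h₂ he).symm

lemma QT.onInnerSide_iff_of_walk (hnc : ∀ p ∈ T, ∀ q ∈ T, ¬ Crosses p q) {a b : Fin m}
    (hab : IsSide T s(a, b)) {x y : {p : Sym2 (Fin m) // p ∈ T}} (q : (QT T).Walk x y)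
    (hq : ∀ z ∈ q.support, (z : Sym2 (Fin m)) ≠ s(a, b)) :
    OnInnerSide a b x ↔ OnInnerSide a b y := by
  induction q with
  | nil => rfl
  | cons h q ih =>
    simp only [SimpleGraph.Walk.support_cons, List.mem_cons, forall_eq_or_imp] at hq
    exact (onInnerSide_iff_of_adj hnc hab h hq.1 (hq.2 _ q.start_mem_support)).trans (ih hq.2)

lemma IsTriangle.eq_of_mem_Ioo_iff (hnc : ∀ p ∈ T, ∀ q ∈ T, ¬ Crosses p q) {a b c₁ c₂ : Fin m}
    (hab : a < b) (h₁ : IsTriangle T a b c₁) (h₂ : IsTriangle T a b c₂)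
    (hc : c₁ ∈ Set.Ioo a b ↔ c₂ ∈ Set.Ioo a b) : c₁ = c₂ := by
  by_contra hne
  wlog hlt : c₁ < c₂ generalizing c₁ c₂
  · exact this h₂ h₁ hc.symm (Ne.symm hne) (lt_of_le_of_ne (not_lt.1 hlt) (Ne.symm hne))
  obtain ⟨-, hbc₁, hac₁, -, s₁, s₁'⟩ := h₁
  obtain ⟨-, hbc₂, hac₂, -, s₂, s₂'⟩ := h₂
  have := not_interleaved_of_isSide hnc s₂' (isSide_comm.1 s₁)
  have := not_interleaved_of_isSide hnc (isSide_comm.1 s₁') (isSide_comm.1 s₂)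
  have := not_interleaved_of_isSide hnc (isSide_comm.1 s₁) s₂'
  have := not_interleaved_of_isSide hnc s₁' s₂
  simp only [Set.mem_Ioo] at hc
  omega

lemma QT.exists_triangle_of_walk (hnc : ∀ p ∈ T, ∀ q ∈ T, ¬ Crosses p q)
    {v x y : {p : Sym2 (Fin m) // p ∈ T}} (hv : ¬ (v : Sym2 (Fin m)).IsDiag)
    (hvx : (QT T).Adj v x) (hvy : (QT T).Adj v y) (hxy : x ≠ y) (q : (QT T).Walk x y)
    (hq : v ∉ q.support) :
    ∃ a b c : Fin m, (v : Sym2 (Fin m)) = s(a, b) ∧ (x : Sym2 (Fin m)) = s(a, c) ∧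
      (y : Sym2 (Fin m)) = s(b, c) := by
  obtain ⟨a, b, hab, hvab⟩ : ∃ a b, a < b ∧ (v : Sym2 (Fin m)) = s(a, b) := by
    obtain ⟨a, b, h⟩ : ∃ a b, (v : Sym2 (Fin m)) = s(a, b) := Sym2.exists.1 ⟨_, rfl⟩
    rw [h, Sym2.mk_isDiag_iff] at hv
    rcases Ne.lt_or_gt hv with hab | hab
    · exact ⟨a, b, hab, h⟩
    · exact ⟨b, a, hab, h.trans Sym2.eq_swap⟩
  have hside : IsSide T s(a, b) := .inl (hvab ▸ v.2)
  obtain ⟨c₁, htri₁, hx⟩ := exists_isTriangle_of_adj hvx hvab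
  obtain ⟨c₂, htri₂, hy⟩ := exists_isTriangle_of_adj hvy hvab
  have hxy_side : OnInnerSide a b x ↔ OnInnerSide a b y :=
    onInnerSide_iff_of_walk hnc hside q fun z hz hzv => hq (Subtype.ext (hzv.trans hvab.symm) ▸ hz)
  obtain rfl : c₁ = c₂ := by
    refine htri₁.eq_of_mem_Ioo_iff hnc hab htri₂ ?_
    rcases hx with hx | hx <;> rcases hy with hy | hy <;> simpa [hx, hy] using hxy_side
  rcases hx with hx | hx <;> rcases hy with hy | hy
  · exact absurd (Subtype.ext (hx.trans hy.symm)) hxy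
  · exact ⟨b, a, c₁, hvab.trans Sym2.eq_swap, hx, hy⟩
  · exact ⟨a, b, c₁, hvab, hx, hy⟩
  · exact absurd (Subtype.ext (hx.trans hy.symm)) hxy

lemma QT.exists_triangle_of_isPath (hnc : ∀ p ∈ T, ∀ q ∈ T, ¬ Crosses p q)
    {v x : {p : Sym2 (Fin m) // p ∈ T}} (hv : ¬ (v : Sym2 (Fin m)).IsDiag)
    (hvx : (QT T).Adj v x) (p : (QT T).Walk x v) (hp : p.IsPath) (hlen : 2 ≤ p.length) :
    ∃ a b c : Fin m, (v : Sym2 (Fin m)) = s(a, b) ∧ (x : Sym2 (Fin m)) = s(a, c) ∧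
      (p.penultimate : Sym2 (Fin m)) = s(b, c) := by
  have hnil : ¬ p.Nil := by rw [← SimpleGraph.Walk.length_eq_zero_iff]; omega
  refine exists_triangle_of_walk hnc hv hvx (p.adj_penultimate hnil).symm ?_ p.dropLast ?_
  · intro h
    have := hp.getVert_injOn (by simp) (by simp) (p.getVert_zero.trans h)
    omega
  · have := SimpleGraph.Walk.support_dropLast_concat hnil ▸ hp.support_nodup
    exact fun hv => List.disjoint_of_nodup_append this hv (List.mem_singleton_self v)

end

open SimpleGraph.Walk in
theorem stmt10_general (n : ℕ) (T : Finset (Sym2 (Fin (n + 3))))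
    (hdiag : ∀ p ∈ T, IsDiagonal p)
    (hnc : ∀ p ∈ T, ∀ q ∈ T, ¬ Crosses p q)
    {v : {p : Sym2 (Fin (n + 3)) // p ∈ T}} (w : (QT T).Walk v v)
    (hw : w.IsCycle) :
    w.length = 3 ∧ ∃ a b c : Fin (n + 3),
      s(a, b) ∈ T ∧ s(b, c) ∈ T ∧ s(a, c) ∈ T ∧
      ∀ x ∈ w.support, (x : Sym2 (Fin (n + 3))) = s(a, b) ∨
        (x : Sym2 (Fin (n + 3))) = s(b, c) ∨ (x : Sym2 (Fin (n + 3))) = s(a, c) := by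
  cases w with
  | nil => exact absurd hw (by simp)
  | @cons _ x _ hvx p =>
  obtain ⟨hp, -⟩ := (cons_isCycle_iff p hvx).1 hw
  have hlen : 2 ≤ p.length := by simpa using hw.three_le_length
  obtain ⟨a, b, c, hv, hx, hy⟩ :=
    QT.exists_triangle_of_isPath hnc (hdiag v v.2).1 hvx p hp hlen
  obtain ⟨a', b', c', hx', hv', hnext⟩ :=
    QT.exists_triangle_of_isPath hnc (hdiag x x.2).1 hvx.symm p.reverse hp.reverse (by simpa)
  have hsnd : p.snd = p.penultimate := by
    have hvx' : s(a, b) ≠ s(a, c) := hv ▸ hx ▸ fun h => hvx.ne (Subtype.ext h)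
    rw [penultimate_reverse] at hnext
    exact Subtype.ext (by rw [hnext, hy, Sym2.third_side_eq hvx' (hv.symm.trans hv')
      (hx.symm.trans hx'), Sym2.eq_swap])
  have hlen2 : p.length = 2 := by
    have := hp.getVert_injOn (by simp; omega) (by simp) hsnd
    omega
  refine ⟨by simp [hlen2], a, b, c, hv ▸ v.2, hy ▸ p.penultimate.2, hx ▸ x.2, ?_⟩
  intro z hz
  rcases List.mem_cons.1 (support_cons hvx p ▸ hz) with rfl | hz
  · exact .inl hv
  obtain ⟨i, rfl, hi⟩ := mem_support_iff_exists_getVert.1 hz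
  rw [hlen2] at hi
  interval_cases i
  · simp [hx]
  · simp [hsnd, hy]
  · simp [← hlen2, hv]

/-- For a triangulation `T` of a regular `(n+3)`-gon by `n`
pairwise non-crossing diagonals, the only cycles in the underlying unoriented
graph of the quiver `Q_T` are 3-cycles arising from internal triangles of `T`
(triangles all three of whose sides are diagonals of `T`). -/
theorem stmt10 (n : ℕ) (T : Finset (Sym2 (Fin (n + 3))))
    (hdiag : ∀ p ∈ T, IsDiagonal p)
    (hnc : ∀ p ∈ T, ∀ q ∈ T, ¬ Crosses p q)
    (hcard : T.card = n)
    {v : {p : Sym2 (Fin (n + 3)) // p ∈ T}} (w : (QT T).Walk v v)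
    (hw : w.IsCycle) :
    w.length = 3 ∧ ∃ a b c : Fin (n + 3),
      s(a, b) ∈ T ∧ s(b, c) ∈ T ∧ s(a, c) ∈ T ∧
      ∀ x ∈ w.support, (x : Sym2 (Fin (n + 3))) = s(a, b) ∨
        (x : Sym2 (Fin (n + 3))) = s(b, c) ∨ (x : Sym2 (Fin (n + 3))) = s(a, c) :=
  stmt10_general n T hdiag hnc w hw
end

section
/- Let B be a skew-symmetric integer matrix with entries in {0, ±1}, let Γ = Γ(B) be its quiver, and let A = (a_{xy}) with a_{xy} = (γ_x, γ_y) be the Gram matrix of a companion basis {γ_x} for Γ. Fix a vertex k, and define γ'_x = s_{γ_k}(γ_x) if there is an arrow x → k in Γ, and γ'_x = γ_x otherwise. Then {γ'_x} is a Z-basis of the root lattice ZΦ. -/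
open scoped RealInnerProductSpace

/-!
Every entry of the companion Gram matrix in the column of `k` is an integer, so the mutated
family is `γ'_x = γ_x - e_x γ_k` with `e : X → ℤ` and `e_k = 0` (there is no loop at `k`).
Because `e_k = 0` the shear fixes `γ_k`, so it is a unimodular change of coordinates over `ℤ`
and carries a `ℤ`-basis of `ℤΦ` to a `ℤ`-basis.
-/

section Shear

variable {R M X : Type*} [CommRing R] [AddCommGroup M] [Module R M] [Fintype X] [DecidableEq X]

theorem sum_smul_sub_smul_eq (v : X → M) (e c : X → R) (k : X) :
    ∑ x, c x • (v x - e x • v k) = ∑ x, (c - Pi.single k (∑ y, c y * e y) : X → R) x • v x := by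
  simp only [smul_sub, smul_smul, Finset.sum_sub_distrib, Pi.sub_apply, sub_smul,
    ← Finset.sum_smul, Pi.single_apply, ite_smul, zero_smul, Finset.sum_ite_eq', Finset.mem_univ,
    if_true]

theorem LinearIndependent.sub_smul_of_eq_zero {v : X → M} (hv : LinearIndependent R v)
    {e : X → R} {k : X} (hek : e k = 0) : LinearIndependent R fun x => v x - e x • v k := by
  rw [Fintype.linearIndependent_iff] at hv ⊢
  intro g hg
  rw [sum_smul_sub_smul_eq] at hg
  set S := ∑ y, g y * e y with hS_def
  have hg_eq : g = Pi.single k S := funext fun x => sub_eq_zero.mp (hv _ hg x)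
  have hS : S = 0 := by
    rw [hS_def, hg_eq, Finset.sum_eq_single k (fun y _ hy => by simp [hy]) (by simp), hek,
      mul_zero]
  intro x
  rw [hg_eq, hS, Pi.single_zero, Pi.zero_apply]

theorem exists_sum_smul_sub_smul_eq (v : X → M) {e : X → R} {k : X} (hek : e k = 0)
    (c : X → R) : ∃ c' : X → R, ∑ x, c' x • (v x - e x • v k) = ∑ x, c x • v x := by
  set c' : X → R := c + Pi.single k (∑ y, c y * e y)
  refine ⟨c', ?_⟩
  have hS : ∑ y, c' y * e y = ∑ y, c y * e y := by
    simp [c', add_mul, Finset.sum_add_distrib, Pi.single_apply, hek]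
  rw [sum_smul_sub_smul_eq, hS]
  simp only [c', add_sub_cancel_right]

end Shear

theorem exists_intCast_eq_of_abs_eq_abs {a : ℝ} {n : ℤ} (h : |a| = |(n : ℝ)|) :
    ∃ m : ℤ, a = m := by
  rcases abs_eq_abs.mp h with h | h
  · exact ⟨n, h⟩
  · exact ⟨-n, by rw [h, Int.cast_neg]⟩

theorem stmt11_general {V : Type*} [NormedAddCommGroup V] [InnerProductSpace ℝ V]
    {X : Type*} [Fintype X] [DecidableEq X]
    (Φ : Set V)
    (B : Matrix X X ℤ)
    (hskew : ∀ x y, B y x = - B x y)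
    (γ : X → V) (hγΦ : ∀ x, γ x ∈ Φ)
    (hli : LinearIndependent ℤ γ)
    (hspan : ∀ α ∈ Φ, ∃ c : X → ℤ, α = ∑ x, (c x : ℝ) • γ x)
    (hcomp : ∀ x y, x ≠ y → |⟪γ x, γ y⟫| = |(B x y : ℝ)|)
    (k : X) (γ' : X → V)
    (hγ' : ∀ x, γ' x = if B x k = 1 then γ x - ⟪γ x, γ k⟫ • γ k else γ x) :
    (∀ x, γ' x ∈ Submodule.span ℤ Φ) ∧
    LinearIndependent ℤ γ' ∧
    (∀ α ∈ Φ, ∃ c : X → ℤ, α = ∑ x, (c x : ℝ) • γ' x) := by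
  have hBkk : B k k = 0 := by have := hskew k k; omega
  have hint : ∀ x, ∃ n : ℤ, (if B x k = 1 then ⟪γ x, γ k⟫ else 0) = n := by
    intro x
    split_ifs with hx
    · have hxk : x ≠ k := by rintro rfl; omega
      exact exists_intCast_eq_of_abs_eq_abs (hcomp x k hxk)
    · exact ⟨0, Int.cast_zero.symm⟩
  choose e he using hint
  have hek : e k = 0 := by simpa [hBkk] using (he k).symm
  obtain rfl : γ' = fun x => γ x - e x • γ k := by
    funext x
    rw [hγ' x, ← Int.cast_smul_eq_zsmul ℝ, ← he x]
    split_ifs <;> simp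
  refine ⟨fun x => ?_, hli.sub_smul_of_eq_zero hek, fun α hα => ?_⟩
  · exact sub_mem (Submodule.subset_span (hγΦ x)) (zsmul_mem (Submodule.subset_span (hγΦ k)) _)
  · obtain ⟨c, rfl⟩ := hspan α hα
    obtain ⟨c', hc'⟩ := exists_sum_smul_sub_smul_eq γ hek c
    exact ⟨c', by simpa only [Int.cast_smul_eq_zsmul] using hc'.symm⟩

/-- Inward companion basis mutation at a vertex `k` produces a
`ℤ`-basis of the root lattice.  Here `B` is a skew-symmetric matrix with entries
in `{0, ±1}` (its quiver `Γ` has an arrow `x → k` iff `B x k = 1`), `γ` is a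
companion basis for `Γ` (a `ℤ`-basis of roots of the root lattice `ℤΦ` with
`|(γ_x, γ_y)| = |b_{xy}|`), and `γ'_x = s_{γ_k}(γ_x)` if there is an arrow
`x → k`, `γ'_x = γ_x` otherwise. -/
theorem stmt11 {V : Type*} [NormedAddCommGroup V] [InnerProductSpace ℝ V]
    {X : Type*} [Fintype X] [DecidableEq X]
    (Φ : Set V)
    (hlen : ∀ α ∈ Φ, ⟪α, α⟫ = 2)
    (B : Matrix X X ℤ)
    (hskew : ∀ x y, B y x = - B x y)
    (hent : ∀ x y, B x y = 0 ∨ B x y = 1 ∨ B x y = -1)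
    (γ : X → V) (hγΦ : ∀ x, γ x ∈ Φ)
    (hli : LinearIndependent ℤ γ)
    (hspan : ∀ α ∈ Φ, ∃ c : X → ℤ, α = ∑ x, (c x : ℝ) • γ x)
    (hcomp : ∀ x y, x ≠ y → |⟪γ x, γ y⟫| = |(B x y : ℝ)|)
    (k : X) (γ' : X → V)
    (hγ' : ∀ x, γ' x = if B x k = 1 then γ x - ⟪γ x, γ k⟫ • γ k else γ x) :
    (∀ x, γ' x ∈ Submodule.span ℤ Φ) ∧
    LinearIndependent ℤ γ' ∧
    (∀ α ∈ Φ, ∃ c : X → ℤ, α = ∑ x, (c x : ℝ) • γ' x) :=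
  stmt11_general Φ B hskew γ hγΦ hli hspan hcomp k γ' hγ'
end

section
/- Companion basis mutation (inward at a vertex k) of a companion basis for the quiver Γ of a cluster-tilted algebra of simply-laced Dynkin type yields a companion basis for the mutated quiver Γ' = μ_k(Γ). That is, if {γ_x} is a companion basis for Γ and γ'_x = s_{γ_k}(γ_x) when there is an arrow x → k and γ'_x = γ_x otherwise, then {γ'_x} is a Z-basis of ZΦ whose Gram matrix is a quasi-Cartan companion of the mutated exchange matrix B' = μ_k(B). -/
/-!
Writing `γ'_x = γ_x + n_x γ_k` with `n_k = 0` exhibits `γ'` as a unimodular shear of `γ`, so it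
is again a `ℤ`-basis of the same lattice; reflections keep `Φ` and the form. For the Gram matrix,
`(γ'_x, γ'_y) = (γ_x, γ_y) - (γ_x, γ_k)(γ_y, γ_k)` when exactly one of `x, y` is reflected and is
unchanged otherwise. The correction is nonzero only along a path `x → k → y` (up to swapping
`x, y`), which is also the only place where `μ_k` changes `b_xy`, by `±1`. If `x, y` are not
adjacent, both sides then have absolute value `1`. Otherwise `x, k, y` span a chordless cycle,
hence an oriented triangle, and the sign condition forces `(γ_x, γ_y) = (γ_x, γ_k)(γ_k, γ_y)`, so
both sides vanish.
-/

open scoped RealInnerProductSpace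

open Set Submodule

section Shear

variable {X R M : Type*} [CommRing R] [AddCommGroup M] [Module R M]

def shear (γ : X → M) (k : X) (n : X → R) : X → M := fun x => γ x + n x • γ k

variable {γ : X → M} {k : X} {n : X → R}

theorem linearIndependent_shear [Fintype X] [DecidableEq X] (hγ : LinearIndependent R γ)
    (hn : n k = 0) : LinearIndependent R (shear γ k n) := by
  rw [Fintype.linearIndependent_iff] at hγ ⊢
  intro c hc
  set s := ∑ x, c x * n x
  have hsum : ∑ x, (c + Pi.single k s : X → R) x • γ x = ∑ x, c x • shear γ k n x := by
    simp [shear, s, smul_add, add_smul, smul_smul, Finset.sum_add_distrib, Finset.sum_smul,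
      Pi.single_apply]
  have hcs : c + Pi.single k s = (0 : X → R) := funext <| hγ _ <| hsum.trans hc
  have hc_ne : ∀ x ≠ k, c x = 0 := fun x hx => by simpa [hx] using congrFun hcs x
  have hs : s = 0 := Finset.sum_eq_zero fun x _ => by
    by_cases hx : x = k
    · simp [hx, hn]
    · simp [hc_ne x hx]
  intro x
  simpa [hs] using congrFun hcs x

theorem span_range_shear (hn : n k = 0) : span R (range (shear γ k n)) = span R (range γ) := by
  apply le_antisymm <;> rw [span_le] <;> rintro _ ⟨x, rfl⟩
  · exact add_mem (subset_span ⟨x, rfl⟩) (smul_mem _ _ (subset_span ⟨k, rfl⟩))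
  · have hx : γ x = shear γ k n x - n x • shear γ k n k := by simp [shear, hn]
    rw [hx]
    exact sub_mem (subset_span ⟨x, rfl⟩) (smul_mem _ _ (subset_span ⟨k, rfl⟩))

end Shear

theorem exists_int_sum_eq_iff_mem_span {X V : Type*} [Fintype X] [AddCommGroup V] [Module ℝ V]
    {γ : X → V} {α : V} :
    (∃ c : X → ℤ, α = ∑ x, (c x : ℝ) • γ x) ↔ α ∈ span ℤ (range γ) := by
  simp only [mem_span_range_iff_exists_fun, Int.cast_smul_eq_zsmul, eq_comm]

section Reflection

variable {V : Type*} [NormedAddCommGroup V] [InnerProductSpace ℝ V]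

-- the reflection `s_α` for a root normalised by `⟪α, α⟫ = 2`
def rootReflection (α v : V) : V := v - ⟪v, α⟫ • α

theorem inner_rootReflection_left (α v w : V) :
    ⟪rootReflection α v, w⟫ = ⟪v, w⟫ - ⟪v, α⟫ * ⟪w, α⟫ := by
  rw [rootReflection, inner_sub_left, real_inner_smul_left, real_inner_comm α w]

theorem inner_rootReflection_rootReflection {α : V} (hα : ⟪α, α⟫ = 2) (v w : V) :
    ⟪rootReflection α v, rootReflection α w⟫ = ⟪v, w⟫ := by
  simp only [rootReflection, inner_sub_left, inner_sub_right, real_inner_smul_left,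
    real_inner_smul_right, hα, real_inner_comm α w]
  ring

end Reflection

def Matrix.mutation {X : Type*} [DecidableEq X] (B : Matrix X X ℤ) (k : X) : Matrix X X ℤ :=
  Matrix.of fun x y => if x = k ∨ y = k then -B x y
    else B x y + (|B x k| * B k y + B x k * |B k y|) / 2

def inwardMutation {V X : Type*} [NormedAddCommGroup V] [InnerProductSpace ℝ V]
    (B : Matrix X X ℤ) (γ : X → V) (k : X) : X → V :=
  fun x => if B x k = 1 then rootReflection (γ k) (γ x) else γ x

theorem mutation_correction_eq {a b : ℤ} (ha : a = 0 ∨ a = 1 ∨ a = -1)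
    (hb : b = 0 ∨ b = 1 ∨ b = -1) :
    (|a| * b + a * |b|) / 2 = if a = 1 ∧ b = 1 then 1 else if a = -1 ∧ b = -1 then -1 else 0 := by
  rcases ha with rfl | rfl | rfl <;> rcases hb with rfl | rfl | rfl <;> rfl

namespace Matrix

variable {X : Type*} [DecidableEq X] {B : Matrix X X ℤ} {k x y : X}

theorem mutation_apply_of_ne (hent : ∀ x y, B x y = 0 ∨ B x y = 1 ∨ B x y = -1)
    (hx : x ≠ k) (hy : y ≠ k) :
    B.mutation k x y =
      B x y + if B x k = 1 ∧ B k y = 1 then 1 else if B x k = -1 ∧ B k y = -1 then -1 else 0 := by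
  rw [mutation, of_apply, if_neg (by tauto), mutation_correction_eq (hent x k) (hent k y)]

theorem mutation_apply_left : B.mutation k k y = -B k y := by
  simp [mutation]

theorem mutation_apply_right : B.mutation k x k = -B x k := by
  simp [mutation]

theorem mutation_skew (hskew : ∀ x y, B y x = -B x y)
    (hent : ∀ x y, B x y = 0 ∨ B x y = 1 ∨ B x y = -1) : B.mutation k y x = -B.mutation k x y := by
  by_cases hx : x = k
  · subst hx
    rw [mutation_apply_right, mutation_apply_left, hskew]
  by_cases hy : y = k
  · subst hy
    rw [mutation_apply_right, mutation_apply_left, hskew]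
  rw [mutation_apply_of_ne hent hx hy, mutation_apply_of_ne hent hy hx, hskew x y, hskew x k,
    hskew y k]
  split_ifs <;> omega

end Matrix

section Quiver

variable {V : Type*} [NormedAddCommGroup V] [InnerProductSpace ℝ V] {X : Type*}

def IsCompanion (B : Matrix X X ℤ) (γ : X → V) : Prop :=
  ∀ x y, x ≠ y → |⟪γ x, γ y⟫| = |(B x y : ℝ)|

def ChordlessCyclesOriented (B : Matrix X X ℤ) : Prop :=
  ∀ (m : ℕ) (v : Fin (m + 3) → X), Function.Injective v →
    (∀ i, B (v i) (v (i + 1)) ≠ 0) →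
    (∀ i j : Fin (m + 3), j ≠ i + 1 → i ≠ j + 1 → i ≠ j → B (v i) (v j) = 0) →
    (∀ i, B (v i) (v (i + 1)) = 1) ∨ (∀ i, B (v i) (v (i + 1)) = -1)

def ChordlessCycleProductsNeg (B : Matrix X X ℤ) (γ : X → V) : Prop :=
  ∀ (m : ℕ) (v : Fin (m + 3) → X), Function.Injective v →
    (∀ i, B (v i) (v (i + 1)) = 1) →
    (∀ i j : Fin (m + 3), j ≠ i + 1 → i ≠ j + 1 → i ≠ j → B (v i) (v j) = 0) →
    (∏ i, (-⟪γ (v i), γ (v (i + 1))⟫)) < 0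

end Quiver

theorem Fin.eq_or_adjacent_three (i j : Fin 3) : j = i + 1 ∨ i = j + 1 ∨ i = j := by
  revert i j
  decide

theorem injective_triple_of_ne {X : Type*} {p q r : X} (hpq : p ≠ q) (hqr : q ≠ r)
    (hpr : p ≠ r) : Function.Injective ![p, q, r] := by
  intro i j h
  fin_cases i <;> fin_cases j <;> simp_all [eq_comm]

section Triangle

variable {V : Type*} [NormedAddCommGroup V] [InnerProductSpace ℝ V] {X : Type*}
  {B : Matrix X X ℤ} {p q r : X}

theorem triangle_isChordless {v : Fin (0 + 3) → X} (i j : Fin (0 + 3)) (h₁ : j ≠ i + 1)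
    (h₂ : i ≠ j + 1) (h₃ : i ≠ j) : B (v i) (v j) = 0 :=
  (((Fin.eq_or_adjacent_three i j).resolve_left h₁).resolve_left h₂ |> h₃).elim

theorem ChordlessCyclesOriented.eq_one_of_triangle (hcyc : ChordlessCyclesOriented B)
    (hpq : p ≠ q) (hqr : q ≠ r) (hpr : p ≠ r) (h₁ : B p q = 1) (h₂ : B q r = 1)
    (h₃ : B r p ≠ 0) : B r p = 1 := by
  have hne : ∀ i, B (![p, q, r] i) (![p, q, r] (i + 1)) ≠ 0 := by
    intro i
    fin_cases i <;> simp [h₁, h₂, h₃]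
  rcases hcyc 0 _ (injective_triple_of_ne hpq hqr hpr) hne triangle_isChordless with h | h
  · simpa using h 2
  · simpa [h₁] using h 0

theorem ChordlessCycleProductsNeg.inner_triangle_pos {γ : X → V}
    (hA : ChordlessCycleProductsNeg B γ) (hpq : p ≠ q) (hqr : q ≠ r) (hpr : p ≠ r)
    (h₁ : B p q = 1) (h₂ : B q r = 1) (h₃ : B r p = 1) :
    0 < ⟪γ p, γ q⟫ * ⟪γ q, γ r⟫ * ⟪γ r, γ p⟫ := by
  have hone : ∀ i, B (![p, q, r] i) (![p, q, r] (i + 1)) = 1 := by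
    intro i
    fin_cases i <;> simp [h₁, h₂, h₃]
  have h := hA 0 _ (injective_triple_of_ne hpq hqr hpr) hone triangle_isChordless
  rw [Fin.prod_univ_three] at h
  change -⟪γ p, γ q⟫ * -⟪γ q, γ r⟫ * -⟪γ r, γ p⟫ < 0 at h
  linarith

end Triangle

section InwardMutation

variable {V : Type*} [NormedAddCommGroup V] [InnerProductSpace ℝ V] {X : Type*}
  {B : Matrix X X ℤ} {γ : X → V} {k x y : X}

theorem inwardMutation_mem {Φ : Set V} (hrefl : ∀ α ∈ Φ, ∀ β ∈ Φ, rootReflection α β ∈ Φ)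
    (hγ : ∀ x, γ x ∈ Φ) (x : X) : inwardMutation B γ k x ∈ Φ := by
  unfold inwardMutation
  split_ifs
  exacts [hrefl _ (hγ k) _ (hγ x), hγ x]

theorem inner_inwardMutation (hk : ⟪γ k, γ k⟫ = 2) (x y : X) :
    ⟪inwardMutation B γ k x, inwardMutation B γ k y⟫ = ⟪γ x, γ y⟫ -
      if (B x k = 1 ↔ B y k = 1) then 0 else ⟪γ x, γ k⟫ * ⟪γ y, γ k⟫ := by
  by_cases hx : B x k = 1 <;> by_cases hy : B y k = 1 <;> simp only [inwardMutation, hx, hy,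
    if_true, if_false, iff_self, iff_true, iff_false, not_true, sub_zero]
  · exact inner_rootReflection_rootReflection hk _ _
  · exact inner_rootReflection_left _ _ _
  · rw [real_inner_comm, inner_rootReflection_left, real_inner_comm (γ y), mul_comm]

theorem exists_inwardMutation_eq_shear (hkk : B k k ≠ 1)
    (hint : ∀ x, ∃ m : ℤ, ⟪γ x, γ k⟫ = m) :
    ∃ n : X → ℤ, n k = 0 ∧ inwardMutation B γ k = shear γ k n := by
  choose m hm using hint
  refine ⟨fun x => if B x k = 1 then -m x else 0, by simp [hkk], funext fun x => ?_⟩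
  by_cases hx : B x k = 1 <;>
    simp [inwardMutation, shear, rootReflection, hx, hm, sub_eq_add_neg, Int.cast_smul_eq_zsmul]

end InwardMutation

namespace IsCompanion

variable {V : Type*} [NormedAddCommGroup V] [InnerProductSpace ℝ V] {X : Type*}
  {B : Matrix X X ℤ} {γ : X → V} {k x y : X}

theorem inner_eq_zero (hcomp : IsCompanion B γ) (hxy : x ≠ y) (h : B x y = 0) :
    ⟪γ x, γ y⟫ = 0 := by
  simpa [h] using hcomp x y hxy

theorem inner_eq_one_or_neg_one (hcomp : IsCompanion B γ) (hxy : x ≠ y)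
    (h : B x y = 1 ∨ B x y = -1) : ⟪γ x, γ y⟫ = 1 ∨ ⟪γ x, γ y⟫ = -1 := by
  refine (abs_eq zero_le_one).1 ?_
  rcases h with h | h <;> simp [hcomp x y hxy, h]

theorem exists_int_eq_inner (hcomp : IsCompanion B γ) (hk : ⟪γ k, γ k⟫ = 2) (x : X) :
    ∃ m : ℤ, ⟪γ x, γ k⟫ = m := by
  by_cases hx : x = k
  · exact ⟨2, by rw [hx, hk]; norm_num⟩
  rcases abs_eq_abs.1 (hcomp x k hx) with h | h
  exacts [⟨_, h⟩, ⟨-B x k, by rw [h]; push_cast; ring⟩]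

theorem abs_inner_sub_mul_of_path (hcomp : IsCompanion B γ) (hcyc : ChordlessCyclesOriented B)
    (hA : ChordlessCycleProductsNeg B γ) (hskew : ∀ x y, B y x = -B x y)
    (hent : ∀ x y, B x y = 0 ∨ B x y = 1 ∨ B x y = -1)
    (hxk : x ≠ k) (hky : k ≠ y) (hxy : x ≠ y) (h₁ : B x k = 1) (h₂ : B k y = 1) :
    |⟪γ x, γ y⟫ - ⟪γ x, γ k⟫ * ⟪γ y, γ k⟫| = |(B x y : ℝ) + 1| := by
  have hyk : B y k = -1 := by rw [hskew, h₂]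
  have hu := hcomp.inner_eq_one_or_neg_one hxk (.inl h₁)
  have hw := hcomp.inner_eq_one_or_neg_one hky.symm (.inr hyk)
  rcases hent x y with h | h | h
  · rw [hcomp.inner_eq_zero hxy h, h]
    rcases hu with hu | hu <;> rcases hw with hw | hw <;> norm_num [hu, hw]
  · have hyx := hcyc.eq_one_of_triangle hxk hky hxy h₁ h₂ (by simp [hskew x y, h])
    simp [hskew x y, h] at hyx
  · have hpos := hA.inner_triangle_pos hxk hky hxy h₁ h₂ (by simp [hskew x y, h])
    rw [real_inner_comm (γ y) (γ k), real_inner_comm (γ x) (γ y)] at hpos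
    have hv := hcomp.inner_eq_one_or_neg_one hxy (.inr h)
    revert hpos
    rcases hu with hu | hu <;> rcases hw with hw | hw <;> rcases hv with hv | hv <;>
      norm_num [hu, hw, hv, h]

variable [DecidableEq X]

theorem abs_inner_inwardMutation_left (hcomp : IsCompanion B γ) (hk : ⟪γ k, γ k⟫ = 2)
    (hkk : B k k = 0) (hyk : y ≠ k) :
    |⟪inwardMutation B γ k k, inwardMutation B γ k y⟫| = |(B.mutation k k y : ℝ)| := by
  rw [inner_inwardMutation hk, Matrix.mutation_apply_left, hkk, Int.cast_neg, abs_neg,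
    ← hcomp k y hyk.symm]
  by_cases hy : B y k = 1
  · rw [if_neg (by simp [hy]), hk, real_inner_comm (γ k),
      show ⟪γ k, γ y⟫ - 2 * ⟪γ k, γ y⟫ = -⟪γ k, γ y⟫ by ring, abs_neg]
  · rw [if_pos (by simp [hy]), sub_zero]

theorem abs_inner_inwardMutation_of_path (hcomp : IsCompanion B γ)
    (hcyc : ChordlessCyclesOriented B) (hA : ChordlessCycleProductsNeg B γ)
    (hk : ⟪γ k, γ k⟫ = 2) (hskew : ∀ x y, B y x = -B x y)
    (hent : ∀ x y, B x y = 0 ∨ B x y = 1 ∨ B x y = -1)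
    (hxk : x ≠ k) (hky : k ≠ y) (hxy : x ≠ y) (h₁ : B x k = 1) (h₂ : B k y = 1) :
    |⟪inwardMutation B γ k x, inwardMutation B γ k y⟫| = |(B.mutation k x y : ℝ)| := by
  have hyk : B y k ≠ 1 := by rw [hskew, h₂]; norm_num
  rw [inner_inwardMutation hk, if_neg (by tauto), Matrix.mutation_apply_of_ne hent hxk hky.symm,
    if_pos ⟨h₁, h₂⟩]
  push_cast
  exact hcomp.abs_inner_sub_mul_of_path hcyc hA hskew hent hxk hky hxy h₁ h₂

theorem abs_inner_inwardMutation_of_not_path (hcomp : IsCompanion B γ) (hk : ⟪γ k, γ k⟫ = 2)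
    (hskew : ∀ x y, B y x = -B x y) (hent : ∀ x y, B x y = 0 ∨ B x y = 1 ∨ B x y = -1)
    (hxk : x ≠ k) (hyk : y ≠ k) (hxy : x ≠ y) (h₁ : ¬(B x k = 1 ∧ B k y = 1))
    (h₂ : ¬(B y k = 1 ∧ B k x = 1)) :
    |⟪inwardMutation B γ k x, inwardMutation B γ k y⟫| = |(B.mutation k x y : ℝ)| := by
  have h₂' : ¬(B x k = -1 ∧ B k y = -1) := by
    have := hskew y k
    have := hskew x k
    omega
  have hcross : (if (B x k = 1 ↔ B y k = 1) then 0 else ⟪γ x, γ k⟫ * ⟪γ y, γ k⟫) = 0 := by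
    split_ifs with hiff
    · rfl
    by_cases hx : B x k = 1
    · have hy1 : B y k ≠ 1 := fun hy => hiff (iff_of_true hx hy)
      have hy0 : B y k = 0 := by have := hent y k; have := hskew y k; omega
      rw [hcomp.inner_eq_zero hyk hy0, mul_zero]
    · have hy1 : B y k = 1 := by_contra fun hy => hiff (iff_of_false hx hy)
      have hx0 : B x k = 0 := by have := hent x k; have := hskew x k; omega
      rw [hcomp.inner_eq_zero hxk hx0, zero_mul]
  rw [inner_inwardMutation hk, hcross, Matrix.mutation_apply_of_ne hent hxk hyk, if_neg h₁,
    if_neg h₂', sub_zero, add_zero, hcomp x y hxy]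

theorem mutation (hcomp : IsCompanion B γ) (hcyc : ChordlessCyclesOriented B)
    (hA : ChordlessCycleProductsNeg B γ) (hk : ⟪γ k, γ k⟫ = 2) (hskew : ∀ x y, B y x = -B x y)
    (hent : ∀ x y, B x y = 0 ∨ B x y = 1 ∨ B x y = -1) :
    IsCompanion (B.mutation k) (inwardMutation B γ k) := by
  have hkk : B k k = 0 := by have := hskew k k; omega
  have hswap : ∀ {x y : X}, |⟪inwardMutation B γ k x, inwardMutation B γ k y⟫| =
        |(B.mutation k x y : ℝ)| →
      |⟪inwardMutation B γ k y, inwardMutation B γ k x⟫| =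
        |(B.mutation k y x : ℝ)| := fun h => by
    rw [real_inner_comm, h, Matrix.mutation_skew hskew hent, Int.cast_neg, abs_neg]
  intro x y hxy
  by_cases hx : x = k
  · subst hx
    exact hcomp.abs_inner_inwardMutation_left hk hkk hxy.symm
  by_cases hy : y = k
  · subst hy
    exact hswap (hcomp.abs_inner_inwardMutation_left hk hkk hx)
  by_cases hxky : B x k = 1 ∧ B k y = 1
  · exact hcomp.abs_inner_inwardMutation_of_path hcyc hA hk hskew hent hx (Ne.symm hy) hxy
      hxky.1 hxky.2
  by_cases hykx : B y k = 1 ∧ B k x = 1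
  · exact hswap (hcomp.abs_inner_inwardMutation_of_path hcyc hA hk hskew hent hy (Ne.symm hx)
      (Ne.symm hxy) hykx.1 hykx.2)
  exact hcomp.abs_inner_inwardMutation_of_not_path hk hskew hent hx hy hxy hxky hykx

end IsCompanion

/-- Inward companion basis mutation.  `Φ` is a simply-laced root
system (roots of squared length 2, closed under reflections), `B` a
skew-symmetric exchange matrix of the corresponding finite-type cluster algebra
with entries in `{0, ±1}` (so every chordless cycle of its quiver `Γ` is
cyclically oriented, and the companion-basis Gram matrix satisfies the sign
condition `(▲)` on chordless cycles), and `γ` a companion basis for `Γ`.  Then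
`γ'`, given by `γ'_x = s_{γ_k}(γ_x)` when there is an arrow `x → k` and
`γ'_x = γ_x` otherwise, is a companion basis for the mutated quiver
`Γ' = μ_k(Γ)`: it is a `ℤ`-basis of `ℤΦ` consisting of roots whose Gram matrix
is a quasi-Cartan companion of `B' = μ_k(B)`. -/
theorem stmt12 {V : Type*} [NormedAddCommGroup V] [InnerProductSpace ℝ V]
    {X : Type*} [Fintype X] [DecidableEq X]
    (Φ : Set V)
    (hlen : ∀ α ∈ Φ, ⟪α, α⟫ = 2)
    (hrefl : ∀ α ∈ Φ, ∀ β ∈ Φ, β - ⟪β, α⟫ • α ∈ Φ)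
    (B : Matrix X X ℤ)
    (hskew : ∀ x y, B y x = - B x y)
    (hent : ∀ x y, B x y = 0 ∨ B x y = 1 ∨ B x y = -1)
    (γ : X → V) (hγΦ : ∀ x, γ x ∈ Φ)
    (hli : LinearIndependent ℤ γ)
    (hspan : ∀ α ∈ Φ, ∃ c : X → ℤ, α = ∑ x, (c x : ℝ) • γ x)
    (hcomp : ∀ x y, x ≠ y → |⟪γ x, γ y⟫| = |(B x y : ℝ)|)
    -- every chordless cycle of the quiver of `B` is cyclically oriented:
    (hcyc : ∀ (m : ℕ) (v : Fin (m + 3) → X), Function.Injective v →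
      (∀ i, B (v i) (v (i + 1)) ≠ 0) →
      (∀ i j : Fin (m + 3), j ≠ i + 1 → i ≠ j + 1 → i ≠ j → B (v i) (v j) = 0) →
      (∀ i, B (v i) (v (i + 1)) = 1) ∨ (∀ i, B (v i) (v (i + 1)) = -1))
    -- the Gram matrix of `γ` satisfies `∏_{i→j in Z} (-(γ_i, γ_j)) < 0` on
    -- every chordless cycle `Z`:
    (hA : ∀ (m : ℕ) (v : Fin (m + 3) → X), Function.Injective v →
      (∀ i, B (v i) (v (i + 1)) = 1) →
      (∀ i j : Fin (m + 3), j ≠ i + 1 → i ≠ j + 1 → i ≠ j → B (v i) (v j) = 0) →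
      (∏ i, (-⟪γ (v i), γ (v (i + 1))⟫)) < 0)
    (k : X) (γ' : X → V)
    (hγ' : ∀ x, γ' x = if B x k = 1 then γ x - ⟪γ x, γ k⟫ • γ k else γ x)
    (B' : Matrix X X ℤ)
    (hB' : ∀ x y, B' x y = if x = k ∨ y = k then - B x y
      else B x y + (|B x k| * B k y + B x k * |B k y|) / 2) :
    (∀ x, γ' x ∈ Φ) ∧
    LinearIndependent ℤ γ' ∧
    (∀ α ∈ Φ, ∃ c : X → ℤ, α = ∑ x, (c x : ℝ) • γ' x) ∧
    (∀ x, ⟪γ' x, γ' x⟫ = 2) ∧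
    (∀ x y, x ≠ y → |⟪γ' x, γ' y⟫| = |(B' x y : ℝ)|) := by
  obtain rfl : γ' = inwardMutation B γ k := funext hγ'
  obtain rfl : B' = B.mutation k := Matrix.ext hB'
  have hk : ⟪γ k, γ k⟫ = 2 := hlen _ (hγΦ k)
  have hkk : B k k ≠ 1 := by have := hskew k k; omega
  have hmem := inwardMutation_mem (B := B) (k := k) hrefl hγΦ
  obtain ⟨n, hnk, hshear⟩ :=
    exists_inwardMutation_eq_shear hkk (IsCompanion.exists_int_eq_inner hcomp hk)
  refine ⟨hmem, hshear ▸ linearIndependent_shear hli hnk, fun α hα => ?_,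
    fun x => hlen _ (hmem x), IsCompanion.mutation hcomp hcyc hA hk hskew hent⟩
  rw [exists_int_sum_eq_iff_mem_span, hshear, span_range_shear hnk,
    ← exists_int_sum_eq_iff_mem_span]
  exact hspan α hα
end

section
/- Let Φ be a root system of type A_n and Ψ = {γ_x} a companion basis for the quiver Γ of a cluster-tilted algebra of type A_n. For any nontrivial string in Γ with consecutive vertices x_0, x_1, ..., x_t, the element s_{γ_{x_t}} ⋯ s_{γ_{x_1}}(γ_{x_0}) is a root whose support (the set of basis elements appearing with nonzero coefficient in its expansion in Ψ) is exactly {x_0, x_1, ..., x_t}. -/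
/-!
Along a string the reflections act on a single running root: by induction,
`s_{γ_{x_r}} ⋯ s_{γ_{x_1}}(γ_{x_0}) = ∑_{i ≤ r} ε_i γ_{x_i}`, because orthogonality of
non-consecutive vertices leaves only the last summand in the inner product with `γ_{x_{r+1}}`,
so the next reflection just appends `ε_{r+1} γ_{x_{r+1}}` with `ε_{r+1} = -ε_r (γ_{x_{r+1}}, γ_{x_r})`.
Each `ε_i` is a product of signs, hence nonzero, and the vertices of the string are distinct,
so by linear independence of `Ψ` the support is exactly the set of vertices of the string.
-/

open scoped RealInnerProductSpace

open Finset

theorem LinearIndependent.coeff_eq_sum_fiber {R M X ι : Type*} [Ring R] [AddCommGroup M]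
    [Module R M] [Fintype X] [DecidableEq X] {γ : X → M} (hli : LinearIndependent R γ)
    {s : Finset ι} {x : ι → X} {a : ι → R} {c : X → R}
    (h : ∑ y, c y • γ y = ∑ i ∈ s, a i • γ (x i)) (y : X) :
    c y = ∑ i ∈ s with x i = y, a i := by
  refine Fintype.linearIndependent_iffₛ.mp hli c (fun y => ∑ i ∈ s with x i = y, a i) ?_ y
  rw [h, ← sum_fiberwise s x]
  refine sum_congr rfl fun y _ => ?_
  rw [sum_smul]
  exact sum_congr rfl fun i hi => by rw [(mem_filter.mp hi).2]

theorem sum_filter_fiber_ne_zero_iff {ι X M : Type*} [AddCommMonoid M] [DecidableEq X]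
    {s : Finset ι} {x : ι → X} {a : ι → M} (hx : Set.InjOn x s) (ha : ∀ i ∈ s, a i ≠ 0)
    (y : X) : ∑ i ∈ s with x i = y, a i ≠ 0 ↔ ∃ i ∈ s, x i = y := by
  constructor
  · intro hsum
    obtain ⟨i, hi, -⟩ := exists_ne_zero_of_sum_ne_zero hsum
    exact ⟨i, mem_filter.mp hi⟩
  · rintro ⟨i, hi, rfl⟩
    have hi' : i ∈ {j ∈ s | x j = x i} := mem_filter.mpr ⟨hi, rfl⟩
    rw [sum_eq_single_of_mem i hi']
    · exact ha i hi
    · intro j hj hji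
      exact absurd (hx (mem_filter.mp hj).1 hi (mem_filter.mp hj).2) hji

section String

variable {V : Type*} [NormedAddCommGroup V] [InnerProductSpace ℝ V]

theorem applySeq_mem {Φ : Set V} (hrefl : ∀ α ∈ Φ, ∀ β ∈ Φ, β - ⟪β, α⟫ • α ∈ Φ)
    {g : ℕ → V} (hg : ∀ i, g i ∈ Φ) {v : V} (hv : v ∈ Φ) (r : ℕ) : applySeq g r v ∈ Φ := by
  induction r with
  | zero => exact hv
  | succ r ih => exact hrefl _ (hg (r + 1)) _ ih

/-- `stringSign g i` is the coefficient of `g i` in `s_{g_r} ⋯ s_{g_1}(g 0)` for `i ≤ r`. -/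
noncomputable def stringSign (g : ℕ → V) : ℕ → ℝ
  | 0 => 1
  | i + 1 => -stringSign g i * ⟪g (i + 1), g i⟫

theorem stringSign_ne_zero {g : ℕ → V} {t : ℕ} (hadj : ∀ i, i + 1 ≤ t → ⟪g (i + 1), g i⟫ ≠ 0) :
    ∀ i ≤ t, stringSign g i ≠ 0
  | 0, _ => one_ne_zero
  | i + 1, hi => mul_ne_zero (neg_ne_zero.mpr (stringSign_ne_zero hadj i (by omega))) (hadj i hi)

theorem applySeq_eq_sum_stringSign {g : ℕ → V} {t : ℕ}
    (horth : ∀ i j, i + 2 ≤ j → j ≤ t → ⟪g j, g i⟫ = 0) :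
    ∀ r ≤ t, applySeq g r (g 0) = ∑ i ∈ range (r + 1), stringSign g i • g i
  | 0, _ => by simp [applySeq, stringSign]
  | r + 1, hr => by
    have ih := applySeq_eq_sum_stringSign horth r (by omega)
    have hinner : ⟪applySeq g r (g 0), g (r + 1)⟫ = stringSign g r * ⟪g (r + 1), g r⟫ := by
      rw [ih, sum_inner, sum_eq_single_of_mem r (self_mem_range_succ r)]
      · rw [real_inner_smul_left, real_inner_comm]
      · intro i hi hir
        rw [real_inner_smul_left, real_inner_comm,
          horth i (r + 1) (by have := mem_range.mp hi; omega) hr, mul_zero]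
    rw [applySeq, sref, hinner, sum_range_succ _ (r + 1), ← ih, stringSign, sub_eq_add_neg,
      ← neg_smul, neg_mul]

end String

theorem stmt17_general {V : Type*} [NormedAddCommGroup V] [InnerProductSpace ℝ V]
    {X : Type*} [Fintype X]
    (Φ : Set V)
    (hrefl : ∀ α ∈ Φ, ∀ β ∈ Φ, β - ⟪β, α⟫ • α ∈ Φ)
    (γ : X → V) (hγΦ : ∀ x, γ x ∈ Φ)
    (hli : LinearIndependent ℝ γ)
    (t : ℕ) (x : ℕ → X)
    (hinj : ∀ i j, i ≤ t → j ≤ t → x i = x j → i = j)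
    (hadj : ∀ i, i + 1 ≤ t →
      ⟪γ (x (i + 1)), γ (x i)⟫ = 1 ∨ ⟪γ (x (i + 1)), γ (x i)⟫ = -1)
    (horth : ∀ i j, i + 2 ≤ j → j ≤ t → ⟪γ (x j), γ (x i)⟫ = 0) :
    applySeq (fun i => γ (x i)) t (γ (x 0)) ∈ Φ ∧
    ∀ c : X → ℤ, applySeq (fun i => γ (x i)) t (γ (x 0)) = ∑ y, (c y : ℝ) • γ y →
      {y | c y ≠ 0} = {y | ∃ i, i ≤ t ∧ x i = y} := by
  classical
  refine ⟨applySeq_mem hrefl (fun i => hγΦ (x i)) (hγΦ (x 0)) t, fun c hc => ?_⟩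
  have hsign : ∀ i ∈ range (t + 1), stringSign (fun i => γ (x i)) i ≠ 0 := fun i hi =>
    stringSign_ne_zero (fun j hj => by rcases hadj j hj with h | h <;> norm_num [h]) i
      (Nat.lt_succ_iff.mp (mem_range.mp hi))
  have hinjOn : Set.InjOn x (range (t + 1)) := fun i hi j hj =>
    hinj i j (Nat.lt_succ_iff.mp (mem_range.mp hi)) (Nat.lt_succ_iff.mp (mem_range.mp hj))
  have hcoeff := hli.coeff_eq_sum_fiber
    (hc.symm.trans (applySeq_eq_sum_stringSign horth t le_rfl))
  ext y
  simp only [Set.mem_ofPred_eq, ← Int.cast_ne_zero (α := ℝ), hcoeff,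
    sum_filter_fiber_ne_zero_iff hinjOn hsign, mem_range, Nat.lt_succ_iff]

/-- Let `Ψ = {γ_x}` be a companion basis (a `ℤ`-basis of roots of
the root lattice) for the quiver of a cluster-tilted algebra of type `A`, and
let `x_0, x_1, ..., x_t` be the consecutive vertices of a nontrivial string, so
that `(γ_{x_i}, γ_{x_j}) = ±1` when `|i - j| = 1` and `0` when `|i - j| ≥ 2`.
Then `s_{γ_{x_t}} ⋯ s_{γ_{x_1}}(γ_{x_0})` is a root whose support with respect
to `Ψ` is exactly `{x_0, x_1, ..., x_t}`. -/
theorem stmt17 {V : Type*} [NormedAddCommGroup V] [InnerProductSpace ℝ V]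
    {X : Type*} [Fintype X]
    (Φ : Set V)
    (hlen : ∀ α ∈ Φ, ⟪α, α⟫ = 2)
    (hrefl : ∀ α ∈ Φ, ∀ β ∈ Φ, β - ⟪β, α⟫ • α ∈ Φ)
    (γ : X → V) (hγΦ : ∀ x, γ x ∈ Φ)
    (hli : LinearIndependent ℝ γ)
    (hspan : ∀ α ∈ Φ, ∃ c : X → ℤ, α = ∑ y, (c y : ℝ) • γ y)
    (t : ℕ) (ht : 1 ≤ t) (x : ℕ → X)
    (hinj : ∀ i j, i ≤ t → j ≤ t → x i = x j → i = j)
    (hadj : ∀ i, i + 1 ≤ t →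
      ⟪γ (x (i + 1)), γ (x i)⟫ = 1 ∨ ⟪γ (x (i + 1)), γ (x i)⟫ = -1)
    (horth : ∀ i j, i + 2 ≤ j → j ≤ t → ⟪γ (x j), γ (x i)⟫ = 0) :
    applySeq (fun i => γ (x i)) t (γ (x 0)) ∈ Φ ∧
    ∀ c : X → ℤ, applySeq (fun i => γ (x i)) t (γ (x 0)) = ∑ y, (c y : ℝ) • γ y →
      {y | c y ≠ 0} = {y | ∃ i, i ≤ t ∧ x i = y} :=
  stmt17_general Φ hrefl γ hγΦ hli t x hinj hadj horth
end

section
/- Let Γ be the quiver of a cluster-tilted algebra of Dynkin type A_n and Ψ a companion basis for Γ. Then the map sending a string p in Γ to the unique positive root whose support (with respect to Ψ) is the vertex set of p is a bijection between the set of strings in Γ and the set of positive roots Φ⁺. Consequently, the vectors d_α^Ψ for α ∈ Φ⁺ are exactly the 0-1 vectors that are characteristic vectors of vertex sets of strings in Γ, i.e., the dimension vectors of the indecomposable modules over the cluster-tilted algebra. -/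
/-!
Write each `γ x` as `e a - e b` and let `G` be the graph on the coordinates with these edges; it is
connected because `Ψ` spans the root lattice. A path in `G` from `i` to `j` writes `e i - e j` as a
`±1`-combination of the `γ x` along the path, and since two edges of a path are orthogonal unless
they are consecutive, the companion condition makes the path a string. Conversely, along a string
`x 0, …, x t` the partial sums can be signed one at a time so that each is a root: the next `γ` meets
only the last summand, at a nonzero angle, and two roots at an obtuse angle add up to a root unless
they cancel, which linear independence excludes. Finally, two positive roots supported on the same
string have coefficient vectors congruent mod 2, hence coordinates congruent mod 2, which forces them
to be equal.
-/

open scoped RealInnerProductSpace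

/-- The standard basis vector `e_i` of `ℝ^{n+1}`. -/
noncomputable def eA (n : ℕ) (i : Fin (n + 1)) : EuclideanSpace ℝ (Fin (n + 1)) :=
  EuclideanSpace.single i (1 : ℝ)

/-- The root system of type `A_n`: `{e_i - e_j : i ≠ j}`. -/
def rootsA (n : ℕ) : Set (EuclideanSpace ℝ (Fin (n + 1))) :=
  {v | ∃ i j : Fin (n + 1), i ≠ j ∧ v = eA n i - eA n j}

/-- The positive roots of type `A_n`: `{e_i - e_j : i < j}`. -/
def posRootsA (n : ℕ) : Set (EuclideanSpace ℝ (Fin (n + 1))) :=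
  {v | ∃ i j : Fin (n + 1), i < j ∧ v = eA n i - eA n j}

/-- `s` is the vertex set of a string of the quiver of `B` from `p` to `q`:
there is a sequence of distinct vertices `x_0 = p, x_1, ..., x_t = q` with
consecutive vertices joined by an arrow and non-consecutive vertices not joined
(in the quiver of a cluster-tilted algebra of type `A`, strings are exactly such
induced paths), and `s = {x_0, ..., x_t}`. -/
def IsStringBetween {X : Type*} (B : Matrix X X ℤ) (s : Set X) (p q : X) : Prop :=
  ∃ (t : ℕ) (x : ℕ → X),
    (∀ i j, i ≤ t → j ≤ t → x i = x j → i = j) ∧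
    (∀ i, i + 1 ≤ t → B (x i) (x (i + 1)) ≠ 0) ∧
    (∀ i j, i + 2 ≤ j → j ≤ t → B (x i) (x j) = 0) ∧
    x 0 = p ∧ x t = q ∧ s = {y | ∃ i, i ≤ t ∧ x i = y}

/-- The support of `α = Σ c_x γ_x` with respect to the basis `γ` is `s`. -/
def SuppIs {V X : Type*} [NormedAddCommGroup V] [Module ℝ V] [Fintype X]
    (γ : X → V) (α : V) (s : Set X) : Prop :=
  ∃ c : X → ℤ, α = ∑ x, (c x : ℝ) • γ x ∧ s = {y | c y ≠ 0}

section RootsA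

variable {n : ℕ}

theorem inner_eA_eA (i j : Fin (n + 1)) : ⟪eA n i, eA n j⟫ = if i = j then 1 else 0 := by
  simp [eA, EuclideanSpace.inner_single_left]

theorem neg_mem_rootsA {α : EuclideanSpace ℝ (Fin (n + 1))} (hα : α ∈ rootsA n) :
    -α ∈ rootsA n := by
  obtain ⟨i, j, hij, rfl⟩ := hα
  exact ⟨j, i, hij.symm, by abel⟩

theorem posRootsA_subset_rootsA : posRootsA n ⊆ rootsA n := by
  rintro _ ⟨i, j, hij, rfl⟩
  exact ⟨i, j, hij.ne, rfl⟩

theorem mem_posRootsA_or_neg_mem_posRootsA {α : EuclideanSpace ℝ (Fin (n + 1))}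
    (hα : α ∈ rootsA n) : α ∈ posRootsA n ∨ -α ∈ posRootsA n := by
  obtain ⟨i, j, hij, rfl⟩ := hα
  rcases hij.lt_or_gt with h | h
  · exact .inl ⟨i, j, h, rfl⟩
  · exact .inr ⟨j, i, h, by abel⟩

theorem add_mem_rootsA_of_inner_neg {α β : EuclideanSpace ℝ (Fin (n + 1))}
    (hα : α ∈ rootsA n) (hβ : β ∈ rootsA n) (hαβ : ⟪α, β⟫ < 0) (hne : α + β ≠ 0) :
    α + β ∈ rootsA n := by
  obtain ⟨i, j, hij, rfl⟩ := hα
  obtain ⟨k, l, hkl, rfl⟩ := hβ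
  simp only [inner_sub_left, inner_sub_right, inner_eA_eA] at hαβ
  by_cases hil : i = l
  · subst hil
    refine ⟨k, j, fun hkj => hne ?_, by abel⟩
    subst hkj; abel
  · by_cases hjk : j = k
    · subst hjk
      exact ⟨i, l, hil, by abel⟩
    · rw [if_neg hil, if_neg hjk] at hαβ
      split_ifs at hαβ <;> norm_num at hαβ

theorem exists_int_inner_eA_of_mem_rootsA {α : EuclideanSpace ℝ (Fin (n + 1))}
    (hα : α ∈ rootsA n) (m : Fin (n + 1)) : ∃ k : ℤ, ⟪eA n m, α⟫ = k := by
  obtain ⟨i, j, -, rfl⟩ := hα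
  refine ⟨(if m = i then 1 else 0) - (if m = j then 1 else 0), ?_⟩
  simp only [inner_sub_right, inner_eA_eA]
  push_cast
  rfl

theorem eq_of_mem_posRootsA_of_inner_eA_sub_even {α β : EuclideanSpace ℝ (Fin (n + 1))}
    (hα : α ∈ posRootsA n) (hβ : β ∈ posRootsA n)
    (h : ∀ m, ∃ k : ℤ, ⟪eA n m, α - β⟫ = 2 * k) : α = β := by
  obtain ⟨i, j, hij, rfl⟩ := hα
  obtain ⟨k, l, hkl, rfl⟩ := hβ
  have hcoord : ∀ m, ∃ K : ℤ, (if m = i then 1 else 0) - (if m = j then 1 else 0)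
      - ((if m = k then 1 else 0) - (if m = l then 1 else 0)) = 2 * K := fun m => by
    obtain ⟨K, hK⟩ := h m
    simp only [inner_sub_right, inner_eA_eA] at hK
    exact ⟨K, by exact_mod_cast hK⟩
  obtain ⟨K₁, h₁⟩ := hcoord i
  obtain ⟨K₂, h₂⟩ := hcoord j
  obtain ⟨rfl, rfl⟩ : i = k ∧ j = l := by split_ifs at h₁ h₂ <;> omega
  rfl

theorem inner_eA_sub_eA_succ {t : ℕ} {v : ℕ → Fin (n + 1)}
    (hv : ∀ k l, k ≤ t + 1 → l ≤ t + 1 → v k = v l → k = l) {k l : ℕ} (hk : k ≤ t) (hl : l ≤ t) :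
    ⟪eA n (v k) - eA n (v (k + 1)), eA n (v l) - eA n (v (l + 1))⟫ =
      if k = l then 2 else if l = k + 1 ∨ k = l + 1 then -1 else 0 := by
  have hv' : ∀ a b, a ≤ t + 1 → b ≤ t + 1 → (v a = v b ↔ a = b) := fun a b ha hb =>
    ⟨hv a b ha hb, fun h => h ▸ rfl⟩
  simp only [inner_sub_left, inner_sub_right, inner_eA_eA, hv' k l (by omega) (by omega),
    hv' k (l + 1) (by omega) (by omega), hv' (k + 1) l (by omega) (by omega),
    hv' (k + 1) (l + 1) (by omega) (by omega)]
  split_ifs <;> first | omega | norm_num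

end RootsA

structure IsInducedPath {X : Type*} (R : X → X → Prop) (t : ℕ) (x : ℕ → X) : Prop where
  injOn : ∀ i j, i ≤ t → j ≤ t → x i = x j → i = j
  adj : ∀ i, i + 1 ≤ t → R (x i) (x (i + 1))
  not_adj : ∀ i j, i + 2 ≤ j → j ≤ t → ¬R (x i) (x j)

def IsStringSet {X : Type*} (R : X → X → Prop) (s : Set X) : Prop :=
  ∃ t x, IsInducedPath R t x ∧ s = {y | ∃ i, i ≤ t ∧ x i = y}

namespace IsInducedPath

variable {X : Type*} {R R' : X → X → Prop} {t : ℕ} {x : ℕ → X}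

theorem mono (hx : IsInducedPath R t x) {t' : ℕ} (ht : t' ≤ t) : IsInducedPath R t' x :=
  ⟨fun i j hi hj => hx.injOn i j (hi.trans ht) (hj.trans ht), fun i hi => hx.adj i (hi.trans ht),
    fun i j hij hj => hx.not_adj i j hij (hj.trans ht)⟩

theorem congr (hx : IsInducedPath R t x) (hRR' : ∀ y z, y ≠ z → (R y z ↔ R' y z)) :
    IsInducedPath R' t x := by
  obtain ⟨hinj, hadj, hfar⟩ := hx
  refine ⟨hinj, fun i hi => ?_, fun i j hij hj => ?_⟩
  · exact (hRR' _ _ fun h => by have := hinj i (i + 1) (by omega) hi h; omega).1 (hadj i hi)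
  · exact mt (hRR' _ _ fun h => by have := hinj i j (by omega) hj h; omega).2 (hfar i j hij hj)

end IsInducedPath

theorem exists_isStringBetween_iff {X : Type*} (B : Matrix X X ℤ) (R : X → X → Prop)
    (hBR : ∀ y z, y ≠ z → (B y z ≠ 0 ↔ R y z)) (s : Set X) :
    (∃ p q, IsStringBetween B s p q) ↔ IsStringSet R s := by
  constructor
  · rintro ⟨-, -, t, x, hinj, hadj, hfar, -, -, rfl⟩
    exact ⟨t, x, IsInducedPath.congr ⟨hinj, hadj, fun i j hij hj => not_not.2 (hfar i j hij hj)⟩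
      hBR, rfl⟩
  · rintro ⟨t, x, hx, rfl⟩
    obtain ⟨hinj, hadj, hfar⟩ := hx.congr fun y z hyz => (hBR y z hyz).symm
    exact ⟨x 0, x t, t, x, hinj, hadj, fun i j hij hj => not_not.1 (hfar i j hij hj), rfl, rfl, rfl⟩

section StringCoeff

variable {X : Type*} [DecidableEq X]

def stringCoeff (t : ℕ) (x : ℕ → X) (σ : ℕ → ℤ) : X → ℤ :=
  ∑ k ∈ Finset.range (t + 1), Pi.single (x k) (σ k)

theorem stringCoeff_apply (t : ℕ) (x : ℕ → X) (σ : ℕ → ℤ) (z : X) :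
    stringCoeff t x σ z = ∑ k ∈ Finset.range (t + 1), if x k = z then σ k else 0 := by
  simp [stringCoeff, Pi.single_apply, eq_comm]

theorem stringCoeff_neg (t : ℕ) (x : ℕ → X) (σ : ℕ → ℤ) :
    stringCoeff t x (-σ) = -stringCoeff t x σ := by
  simp [stringCoeff, Pi.single_neg, Finset.sum_neg_distrib]

theorem sum_stringCoeff_smul [Fintype X] {M : Type*} [AddCommGroup M] [Module ℝ M] (γ : X → M)
    (t : ℕ) (x : ℕ → X) (σ : ℕ → ℤ) :
    ∑ z, (stringCoeff t x σ z : ℝ) • γ z = ∑ k ∈ Finset.range (t + 1), (σ k : ℝ) • γ (x k) := by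
  simp only [stringCoeff_apply, Int.cast_sum, Finset.sum_smul]
  rw [Finset.sum_comm]
  refine Finset.sum_congr rfl fun k _ => ?_
  simp [ite_smul]

theorem stringCoeff_apply_of_injOn {t : ℕ} {x : ℕ → X} (σ : ℕ → ℤ)
    (hx : ∀ i j, i ≤ t → j ≤ t → x i = x j → i = j) {k : ℕ} (hk : k ≤ t) :
    stringCoeff t x σ (x k) = σ k := by
  rw [stringCoeff_apply, Finset.sum_eq_single_of_mem k (by simp; omega), if_pos rfl]
  intro i hi hik
  exact if_neg fun h => hik (hx i k (by simp at hi; omega) hk h)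

theorem natAbs_stringCoeff {t : ℕ} {x : ℕ → X} {σ : ℕ → ℤ}
    (hx : ∀ i j, i ≤ t → j ≤ t → x i = x j → i = j) (hσ : ∀ k, IsUnit (σ k)) :
    (fun z => (stringCoeff t x σ z).natAbs) = {y | ∃ i, i ≤ t ∧ x i = y}.indicator fun _ => 1 := by
  funext z
  rw [Set.indicator_apply]
  split_ifs with hz
  · obtain ⟨k, hk, rfl⟩ := hz
    rw [stringCoeff_apply_of_injOn σ hx hk, Int.natAbs_of_isUnit (hσ k)]
  · rw [stringCoeff_apply, Finset.sum_eq_zero fun k hk => if_neg fun h => hz ⟨k, ?_, h⟩]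
    · rfl
    · simp at hk; omega

end StringCoeff

theorem setOf_ne_zero_eq_of_natAbs_eq_indicator {X : Type*} {c : X → ℤ} {s : Set X}
    (h : (fun z => (c z).natAbs) = s.indicator fun _ => 1) : {z | c z ≠ 0} = s := by
  ext z
  have hz := congrFun h z
  by_cases hs : z ∈ s <;> simp_all [← Int.natAbs_eq_zero]

theorem isInducedPath_of_smul_eq_eA_sub_eA {n : ℕ} {X : Type*}
    {γ : X → EuclideanSpace ℝ (Fin (n + 1))} {t : ℕ} {v : ℕ → Fin (n + 1)} {x : ℕ → X}
    {σ : ℕ → ℤ} (hv : ∀ k l, k ≤ t + 1 → l ≤ t + 1 → v k = v l → k = l)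
    (hσ : ∀ k, IsUnit (σ k)) (hx : ∀ k ≤ t, (σ k : ℝ) • γ (x k) = eA n (v k) - eA n (v (k + 1))) :
    IsInducedPath (fun y z => ⟪γ y, γ z⟫ ≠ 0) t x := by
  have hγ : ∀ k ≤ t, γ (x k) = (σ k : ℝ) • (eA n (v k) - eA n (v (k + 1))) := fun k hk => by
    rw [← hx k hk, smul_smul, ← Int.cast_mul, Int.isUnit_mul_self (hσ k), Int.cast_one, one_smul]
  have hinner : ∀ k l, k ≤ t → l ≤ t → ⟪γ (x k), γ (x l)⟫ =
      σ k * σ l * if k = l then 2 else if l = k + 1 ∨ k = l + 1 then -1 else 0 := by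
    intro k l hk hl
    rw [hγ k hk, hγ l hl, real_inner_smul_left, real_inner_smul_right,
      inner_eA_sub_eA_succ hv hk hl, mul_assoc]
  have habs : ∀ k, |(σ k : ℝ)| = 1 := fun k => by
    exact_mod_cast Int.isUnit_iff_abs_eq.1 (hσ k)
  refine ⟨fun k l hk hl hkl => ?_, fun k hk => ?_, fun k l hkl hl => ?_⟩
  · by_contra hne
    have h : |⟪γ (x k), γ (x l)⟫| = |⟪γ (x l), γ (x l)⟫| := by rw [hkl]
    rw [hinner k l hk hl, hinner l l hl hl, if_pos rfl, if_neg hne] at h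
    simp only [abs_mul, habs, one_mul] at h
    split_ifs at h <;> norm_num at h
  · show ⟪γ (x k), γ (x (k + 1))⟫ ≠ 0
    rw [hinner k (k + 1) (by omega) hk, if_neg (by omega), if_pos (.inl rfl)]
    exact mul_ne_zero (by exact_mod_cast ((hσ k).mul (hσ (k + 1))).ne_zero) (by norm_num)
  · show ¬⟪γ (x k), γ (x l)⟫ ≠ 0
    rw [not_not, hinner k l (by omega) hl, if_neg (by omega), if_neg (by omega), mul_zero]

section LinearIndependent

variable {X M : Type*} [Fintype X] [AddCommGroup M] [Module ℝ M] {γ : X → M}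

theorem eq_of_sum_intCast_smul_eq (hli : LinearIndependent ℤ γ) {c d : X → ℤ}
    (h : ∑ z, (c z : ℝ) • γ z = ∑ z, (d z : ℝ) • γ z) : c = d := by
  simp only [Int.cast_smul_eq_zsmul] at h
  funext z
  refine sub_eq_zero.1 (Fintype.linearIndependent_iff.1 hli (c - d) ?_ z)
  simp [sub_smul, Finset.sum_sub_distrib, h]

theorem sum_range_smul_ne_zero (hli : LinearIndependent ℤ γ) {t : ℕ} {x : ℕ → X} {σ : ℕ → ℤ}
    (hx : ∀ i j, i ≤ t → j ≤ t → x i = x j → i = j) (hσ : ∀ k, IsUnit (σ k)) :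
    ∑ k ∈ Finset.range (t + 1), (σ k : ℝ) • γ (x k) ≠ 0 := by
  classical
  intro h
  rw [← sum_stringCoeff_smul] at h
  have h0 := congrFun (eq_of_sum_intCast_smul_eq hli (d := 0) (by simpa using h)) (x 0)
  rw [stringCoeff_apply_of_injOn σ hx t.zero_le] at h0
  exact (hσ 0).ne_zero h0

end LinearIndependent

section CompanionBasis

variable {n : ℕ} {X : Type*} [Fintype X] {γ : X → EuclideanSpace ℝ (Fin (n + 1))}

theorem exists_sum_mem_rootsA_of_isInducedPath (hγΦ : ∀ x, γ x ∈ rootsA n)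
    (hli : LinearIndependent ℤ γ) {t : ℕ} {x : ℕ → X}
    (hx : IsInducedPath (fun y z => ⟪γ y, γ z⟫ ≠ 0) t x) :
    ∃ σ : ℕ → ℤ, (∀ k, IsUnit (σ k)) ∧
      ∑ k ∈ Finset.range (t + 1), (σ k : ℝ) • γ (x k) ∈ rootsA n := by
  induction t with
  | zero => exact ⟨1, fun _ => isUnit_one, by simpa using hγΦ (x 0)⟩
  | succ t ih =>
    obtain ⟨σ, hσ, hroot⟩ := ih (hx.mono t.le_succ)
    set β := ∑ k ∈ Finset.range (t + 1), (σ k : ℝ) • γ (x k)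
    have hβ : ⟪β, γ (x (t + 1))⟫ = σ t * ⟪γ (x t), γ (x (t + 1))⟫ := by
      rw [sum_inner, Finset.sum_range_succ, Finset.sum_eq_zero, zero_add, real_inner_smul_left]
      intro k hk
      rw [real_inner_smul_left, not_not.1 (hx.not_adj k (t + 1) (by simp at hk; omega) le_rfl),
        mul_zero]
    have hβ0 : ⟪β, γ (x (t + 1))⟫ ≠ 0 := by
      rw [hβ]
      exact mul_ne_zero (by exact_mod_cast (hσ t).ne_zero) (hx.adj t le_rfl)
    -- the new sign makes the last root meet the partial sum at an obtuse angle
    set s : ℤ := if ⟪β, γ (x (t + 1))⟫ < 0 then 1 else -1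
    have hs : IsUnit s := by unfold s; split_ifs <;> simp
    have hσ' : ∀ k, IsUnit (Function.update σ (t + 1) s k) := fun k => by
      rcases eq_or_ne k (t + 1) with rfl | hk
      · simpa using hs
      · simpa [hk] using hσ k
    have hsum : ∑ k ∈ Finset.range (t + 1 + 1), (Function.update σ (t + 1) s k : ℝ) • γ (x k)
        = β + (s : ℝ) • γ (x (t + 1)) := by
      rw [Finset.sum_range_succ, Function.update_self]
      congr 1
      exact Finset.sum_congr rfl fun k hk => by
        rw [Function.update_of_ne (by simp at hk; omega)]
    refine ⟨Function.update σ (t + 1) s, hσ', hsum ▸ add_mem_rootsA_of_inner_neg hroot ?_ ?_ ?_⟩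
    · unfold s; split_ifs
      · simpa using hγΦ (x (t + 1))
      · simpa using neg_mem_rootsA (hγΦ (x (t + 1)))
    · rw [real_inner_smul_right]
      unfold s; split_ifs with h
      · simpa using h
      · push_cast; nlinarith [lt_of_le_of_ne (not_lt.1 h) (Ne.symm hβ0)]
    · rw [← hsum]
      exact sum_range_smul_ne_zero hli hx.injOn hσ'

theorem exists_posRootsA_natAbs_eq_indicator (hγΦ : ∀ x, γ x ∈ rootsA n)
    (hli : LinearIndependent ℤ γ) {s : Set X}
    (hs : IsStringSet (fun y z => ⟪γ y, γ z⟫ ≠ 0) s) :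
    ∃ α ∈ posRootsA n, ∃ c : X → ℤ, α = ∑ z, (c z : ℝ) • γ z ∧
      (fun z => (c z).natAbs) = s.indicator fun _ => 1 := by
  classical
  obtain ⟨t, x, hx, rfl⟩ := hs
  obtain ⟨σ, hσ, hroot⟩ := exists_sum_mem_rootsA_of_isInducedPath hγΦ hli hx
  rw [← sum_stringCoeff_smul] at hroot
  rcases mem_posRootsA_or_neg_mem_posRootsA hroot with hpos | hneg
  · exact ⟨_, hpos, _, rfl, natAbs_stringCoeff hx.injOn hσ⟩
  · refine ⟨_, hneg, stringCoeff t x (-σ), ?_, natAbs_stringCoeff hx.injOn fun k => (hσ k).neg⟩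
    simp [stringCoeff_neg, Finset.sum_neg_distrib]

theorem exists_int_inner_eA_sum_smul (hγΦ : ∀ x, γ x ∈ rootsA n) (e : X → ℤ) (m : Fin (n + 1)) :
    ∃ k : ℤ, ⟪eA n m, ∑ z, (e z : ℝ) • γ z⟫ = k := by
  choose K hK using fun z => exists_int_inner_eA_of_mem_rootsA (hγΦ z) m
  exact ⟨∑ z, e z * K z, by simp [inner_sum, real_inner_smul_right, hK]⟩

theorem eq_of_mem_posRootsA_of_natAbs_eq (hγΦ : ∀ x, γ x ∈ rootsA n)
    {α β : EuclideanSpace ℝ (Fin (n + 1))} (hα : α ∈ posRootsA n) (hβ : β ∈ posRootsA n)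
    {c d : X → ℤ} (hc : α = ∑ z, (c z : ℝ) • γ z) (hd : β = ∑ z, (d z : ℝ) • γ z)
    (hcd : ∀ z, (c z).natAbs = (d z).natAbs) : α = β := by
  have hcd2 : ∀ z, ∃ e : ℤ, c z - d z = 2 * e := fun z => by
    rcases Int.natAbs_eq_natAbs_iff.1 (hcd z) with h | h
    · exact ⟨0, by omega⟩
    · exact ⟨c z, by omega⟩
  choose e he using hcd2
  have hsub : α - β = (2 : ℝ) • ∑ z, (e z : ℝ) • γ z := by
    rw [hc, hd, ← Finset.sum_sub_distrib, Finset.smul_sum]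
    refine Finset.sum_congr rfl fun z _ => ?_
    rw [← sub_smul, smul_smul, ← Int.cast_sub, he z]
    push_cast; ring_nf
  refine eq_of_mem_posRootsA_of_inner_eA_sub_even hα hβ fun m => ?_
  obtain ⟨k, hk⟩ := exists_int_inner_eA_sum_smul hγΦ e m
  exact ⟨k, by rw [hsub, real_inner_smul_right, hk]⟩

theorem mem_iff_mem_of_eA_sub_eA_eq_sum (hγΦ : ∀ x, γ x ∈ rootsA n) {T : Finset (Fin (n + 1))}
    (hT : ∀ z a b, γ z = eA n a - eA n b → (a ∈ T ↔ b ∈ T)) {i j : Fin (n + 1)} {c : X → ℤ}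
    (hc : eA n i - eA n j = ∑ z, (c z : ℝ) • γ z) : i ∈ T ↔ j ∈ T := by
  -- pair with the indicator vector of `T`, which is orthogonal to every `γ z`
  have hind : ∀ m, ⟪∑ k ∈ T, eA n k, eA n m⟫ = if m ∈ T then 1 else 0 := fun m => by
    simp [sum_inner, inner_eA_eA]
  have horth : ∀ z, ⟪∑ k ∈ T, eA n k, γ z⟫ = 0 := fun z => by
    obtain ⟨a, b, -, hab⟩ := hγΦ z
    rw [hab, inner_sub_right, hind, hind, if_congr (hT z a b hab) rfl rfl, sub_self]
  have h := congrArg (⟪∑ k ∈ T, eA n k, ·⟫) hc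
  simp only [inner_sub_right, hind, inner_sum, real_inner_smul_right, horth, mul_zero,
    Finset.sum_const_zero] at h
  split_ifs at h <;> simp_all

def rootGraph (γ : X → EuclideanSpace ℝ (Fin (n + 1))) : SimpleGraph (Fin (n + 1)) :=
  SimpleGraph.fromRel fun i j => ∃ z, γ z = eA n i - eA n j

theorem rootGraph_reachable (hγΦ : ∀ x, γ x ∈ rootsA n)
    (hspan : ∀ α ∈ rootsA n, ∃ c : X → ℤ, α = ∑ x, (c x : ℝ) • γ x) (i j : Fin (n + 1)) :
    (rootGraph γ).Reachable i j := by
  classical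
  rcases eq_or_ne i j with rfl | hij
  · rfl
  obtain ⟨c, hc⟩ := hspan _ ⟨i, j, hij, rfl⟩
  have hT := mem_iff_mem_of_eA_sub_eA_eq_sum hγΦ (T := {k | (rootGraph γ).Reachable i k})
    (fun z a b hab => ?_) hc
  · simpa using hT
  · rcases eq_or_ne a b with rfl | hne
    · rfl
    have hadj : (rootGraph γ).Adj a b := (SimpleGraph.fromRel_adj _ _ _).2 ⟨hne, .inl ⟨z, hab⟩⟩
    simpa using ⟨fun h => h.trans hadj.reachable, fun h => h.trans hadj.symm.reachable⟩

theorem exists_path_smul_eq_eA_sub_eA (hγΦ : ∀ x, γ x ∈ rootsA n)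
    (hspan : ∀ α ∈ rootsA n, ∃ c : X → ℤ, α = ∑ x, (c x : ℝ) • γ x) {i j : Fin (n + 1)}
    (hij : i ≠ j) :
    ∃ (t : ℕ) (v : ℕ → Fin (n + 1)) (x : ℕ → X) (σ : ℕ → ℤ), v 0 = i ∧ v (t + 1) = j ∧
      (∀ k l, k ≤ t + 1 → l ≤ t + 1 → v k = v l → k = l) ∧ (∀ k, IsUnit (σ k)) ∧
      ∀ k ≤ t, (σ k : ℝ) • γ (x k) = eA n (v k) - eA n (v (k + 1)) := by
  classical
  obtain ⟨w, hw⟩ := (rootGraph_reachable hγΦ hspan i j).exists_isPath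
  have hlen : 0 < w.length := Nat.pos_of_ne_zero fun h => hij (w.eq_of_length_eq_zero h)
  set v := w.getVert
  have hedge : ∀ k < w.length, ∃ z, γ z = eA n (v k) - eA n (v (k + 1)) ∨
      γ z = -(eA n (v k) - eA n (v (k + 1))) := fun k hk => by
    obtain ⟨-, ⟨z, hz⟩ | ⟨z, hz⟩⟩ := (SimpleGraph.fromRel_adj _ _ _).1 (w.adj_getVert_succ hk)
    · exact ⟨z, .inl hz⟩
    · exact ⟨z, .inr (by rw [hz, neg_sub])⟩
  have : Nonempty X := ⟨(hedge 0 hlen).choose⟩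
  choose! x hx using hedge
  refine ⟨w.length - 1, v, x,
    fun k => if γ (x k) = eA n (v k) - eA n (v (k + 1)) then 1 else -1, w.getVert_zero, ?_,
    fun k l hk hl => hw.getVert_injOn (by simp; omega) (by simp; omega),
    fun k => by dsimp only; split_ifs <;> simp, fun k hk => ?_⟩
  · rw [Nat.sub_add_cancel hlen]
    exact w.getVert_length
  · rcases hx k (by omega) with h | h <;> simp [h]

theorem exists_isStringSet_natAbs_eq_indicator (hγΦ : ∀ x, γ x ∈ rootsA n)
    (hli : LinearIndependent ℤ γ)
    (hspan : ∀ α ∈ rootsA n, ∃ c : X → ℤ, α = ∑ x, (c x : ℝ) • γ x)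
    {α : EuclideanSpace ℝ (Fin (n + 1))} (hα : α ∈ rootsA n) {c : X → ℤ}
    (hc : α = ∑ z, (c z : ℝ) • γ z) :
    ∃ s, IsStringSet (fun y z => ⟪γ y, γ z⟫ ≠ 0) s ∧
      (fun z => (c z).natAbs) = s.indicator fun _ => 1 := by
  classical
  obtain ⟨i, j, hij, rfl⟩ := hα
  obtain ⟨t, v, x, σ, rfl, rfl, hv, hσ, hx⟩ := exists_path_smul_eq_eA_sub_eA hγΦ hspan hij
  have hpath := isInducedPath_of_smul_eq_eA_sub_eA hv hσ hx
  have hsum : eA n (v 0) - eA n (v (t + 1)) = ∑ z, (stringCoeff t x σ z : ℝ) • γ z := by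
    rw [sum_stringCoeff_smul, ← Finset.sum_range_sub' (fun k => eA n (v k))]
    exact Finset.sum_congr rfl fun k hk => (hx k (by simp at hk; omega)).symm
  refine ⟨_, ⟨t, x, hpath, rfl⟩, ?_⟩
  rw [eq_of_sum_intCast_smul_eq hli (hc.symm.trans hsum)]
  exact natAbs_stringCoeff hpath.injOn hσ

theorem existsUnique_posRootsA_suppIs (hγΦ : ∀ x, γ x ∈ rootsA n) (hli : LinearIndependent ℤ γ)
    (hspan : ∀ α ∈ rootsA n, ∃ c : X → ℤ, α = ∑ x, (c x : ℝ) • γ x) {s : Set X}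
    (hs : IsStringSet (fun y z => ⟪γ y, γ z⟫ ≠ 0) s) :
    ∃! α, α ∈ posRootsA n ∧ SuppIs γ α s := by
  obtain ⟨α, hα, c, hc, hcs⟩ := exists_posRootsA_natAbs_eq_indicator hγΦ hli hs
  refine ⟨α, ⟨hα, c, hc, (setOf_ne_zero_eq_of_natAbs_eq_indicator hcs).symm⟩, ?_⟩
  rintro β ⟨hβ, d, hd, rfl⟩
  obtain ⟨s', -, hds'⟩ :=
    exists_isStringSet_natAbs_eq_indicator hγΦ hli hspan (posRootsA_subset_rootsA hβ) hd
  rw [setOf_ne_zero_eq_of_natAbs_eq_indicator hds', ← hds'] at hcs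
  exact (eq_of_mem_posRootsA_of_natAbs_eq hγΦ hα hβ hc hd (congrFun hcs)).symm

theorem existsUnique_isStringSet_suppIs (hγΦ : ∀ x, γ x ∈ rootsA n)
    (hli : LinearIndependent ℤ γ)
    (hspan : ∀ α ∈ rootsA n, ∃ c : X → ℤ, α = ∑ x, (c x : ℝ) • γ x)
    {α : EuclideanSpace ℝ (Fin (n + 1))} (hα : α ∈ posRootsA n) :
    ∃! s, IsStringSet (fun y z => ⟪γ y, γ z⟫ ≠ 0) s ∧ SuppIs γ α s := by
  obtain ⟨c, hc⟩ := hspan α (posRootsA_subset_rootsA hα)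
  obtain ⟨s, hs, hcs⟩ :=
    exists_isStringSet_natAbs_eq_indicator hγΦ hli hspan (posRootsA_subset_rootsA hα) hc
  refine ⟨s, ⟨hs, c, hc, (setOf_ne_zero_eq_of_natAbs_eq_indicator hcs).symm⟩, ?_⟩
  rintro s' ⟨-, d, hd, rfl⟩
  rw [eq_of_sum_intCast_smul_eq hli (hd.symm.trans hc)]
  exact setOf_ne_zero_eq_of_natAbs_eq_indicator hcs

theorem setOf_natAbs_coeff_posRootsA_eq (hγΦ : ∀ x, γ x ∈ rootsA n) (hli : LinearIndependent ℤ γ)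
    (hspan : ∀ α ∈ rootsA n, ∃ c : X → ℤ, α = ∑ x, (c x : ℝ) • γ x) :
    {d : X → ℕ | ∃ α ∈ posRootsA n, ∃ c : X → ℤ,
        α = ∑ x, (c x : ℝ) • γ x ∧ d = fun x => (c x).natAbs} =
      {d | ∃ s, IsStringSet (fun y z => ⟪γ y, γ z⟫ ≠ 0) s ∧ d = s.indicator fun _ => 1} := by
  ext d
  constructor
  · rintro ⟨α, hα, c, hc, rfl⟩
    exact exists_isStringSet_natAbs_eq_indicator hγΦ hli hspan (posRootsA_subset_rootsA hα) hc
  · rintro ⟨s, hs, rfl⟩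
    obtain ⟨α, hα, c, hc, hcs⟩ := exists_posRootsA_natAbs_eq_indicator hγΦ hli hs
    exact ⟨α, hα, c, hc, hcs.symm⟩

end CompanionBasis

theorem stmt18_general (n : ℕ) {X : Type*} [Fintype X]
    (B : Matrix X X ℤ)
    (γ : X → EuclideanSpace ℝ (Fin (n + 1)))
    (hγΦ : ∀ x, γ x ∈ rootsA n)
    (hli : LinearIndependent ℤ γ)
    (hspan : ∀ α ∈ rootsA n, ∃ c : X → ℤ, α = ∑ x, (c x : ℝ) • γ x)
    (hcomp : ∀ x y, x ≠ y → |⟪γ x, γ y⟫| = |(B x y : ℝ)|) :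
    (∀ s : Set X, (∃ p q, IsStringBetween B s p q) →
      ∃! α, α ∈ posRootsA n ∧ SuppIs γ α s) ∧
    (∀ α ∈ posRootsA n, ∃! s : Set X,
      (∃ p q, IsStringBetween B s p q) ∧ SuppIs γ α s) ∧
    {d : X → ℕ | ∃ α ∈ posRootsA n, ∃ c : X → ℤ,
        α = ∑ x, (c x : ℝ) • γ x ∧ d = fun x => (c x).natAbs} =
    {d : X → ℕ | ∃ (s : Set X) (p q : X), IsStringBetween B s p q ∧
        d = s.indicator fun _ => 1} := by
  have hstrings := exists_isStringBetween_iff B (fun y z => ⟪γ y, γ z⟫ ≠ 0) fun y z hyz => by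
    rw [← abs_ne_zero (a := ⟪γ y, γ z⟫), hcomp y z hyz, abs_ne_zero, Int.cast_ne_zero]
  refine ⟨fun s hs => existsUnique_posRootsA_suppIs hγΦ hli hspan ((hstrings s).1 hs),
    fun α hα => ?_, ?_⟩
  · simpa only [hstrings] using existsUnique_isStringSet_suppIs hγΦ hli hspan hα
  · simpa only [exists_and_right, hstrings] using setOf_natAbs_coeff_posRootsA_eq hγΦ hli hspan

/-- Let `Γ` be the quiver of a cluster-tilted algebra of type
`A_n` (skew-symmetric matrix `B` with entries in `{0, ±1}` on `n` vertices,
with a unique string between any two vertices) and `Ψ = {γ_x}` a companion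
basis for `Γ`.  Then mapping a string to the unique positive root supported on
its vertex set is a bijection between strings and positive roots, and the
vectors `d_α^Ψ` for `α ∈ Φ⁺` are exactly the characteristic (0-1) vectors of
vertex sets of strings, i.e. the dimension vectors of the indecomposable
modules over the cluster-tilted algebra. -/
theorem stmt18 (n : ℕ) {X : Type*} [Fintype X] [DecidableEq X]
    (hX : Fintype.card X = n)
    (B : Matrix X X ℤ)
    (hskew : ∀ x y, B y x = - B x y)
    (hent : ∀ x y, B x y = 0 ∨ B x y = 1 ∨ B x y = -1)
    (γ : X → EuclideanSpace ℝ (Fin (n + 1)))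
    (hγΦ : ∀ x, γ x ∈ rootsA n)
    (hli : LinearIndependent ℤ γ)
    (hspan : ∀ α ∈ rootsA n, ∃ c : X → ℤ, α = ∑ x, (c x : ℝ) • γ x)
    (hcomp : ∀ x y, x ≠ y → |⟪γ x, γ y⟫| = |(B x y : ℝ)|)
    (hstring : ∀ p q : X, ∃! s : Set X, IsStringBetween B s p q) :
    (∀ s : Set X, (∃ p q, IsStringBetween B s p q) →
      ∃! α, α ∈ posRootsA n ∧ SuppIs γ α s) ∧
    (∀ α ∈ posRootsA n, ∃! s : Set X,
      (∃ p q, IsStringBetween B s p q) ∧ SuppIs γ α s) ∧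
    {d : X → ℕ | ∃ α ∈ posRootsA n, ∃ c : X → ℤ,
        α = ∑ x, (c x : ℝ) • γ x ∧ d = fun x => (c x).natAbs} =
    {d : X → ℕ | ∃ (s : Set X) (p q : X), IsStringBetween B s p q ∧
        d = s.indicator fun _ => 1} :=
  stmt18_general n B γ hγΦ hli hspan hcomp
end
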